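/- arXiv:2605.08603 — 15 statements merged into one kernel-verified Lean document; each statement's English description precedes it below -/
import Mathlib

section
/- Let n ≥ 2k and let H ⊆ ([n] choose k) be a saturated intersecting family (i.e., adding any k-set destroys the intersecting property). Then the family T(H) of all sets T ⊆ [n] with |T| ≤ k that meet every member of H is itself intersecting: any two covers T, T' ∈ T(H) satisfy T ∩ T' ≠ ∅. -/
/-- If `n ≥ 2k` and `H ⊆ ([n] choose k)` is a saturated intersecting family,
then any two covers of `H` of size at most `k` intersect. -/
theorem covers_of_saturated_intersecting
    (n k : ℕ) (hnk : 2 * k ≤ n) (H : Finset (Finset ℕ))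
    (hHsub : ∀ F ∈ H, F ⊆ Finset.Icc 1 n ∧ F.card = k)
    (hint : ∀ F ∈ H, ∀ F' ∈ H, (F ∩ F').Nonempty)
    (hsat : ∀ G ⊆ Finset.Icc 1 n, G.card = k → G ∉ H → ∃ F ∈ H, F ∩ G = ∅)
    (T T' : Finset ℕ) (hT : T ⊆ Finset.Icc 1 n) (hT' : T' ⊆ Finset.Icc 1 n)
    (hTk : T.card ≤ k) (hT'k : T'.card ≤ k)
    (hcov : ∀ F ∈ H, (T ∩ F).Nonempty) (hcov' : ∀ F ∈ H, (T' ∩ F).Nonempty) :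
    (T ∩ T').Nonempty := by
  by_contra hdisj
  rw [Finset.not_nonempty_iff_eq_empty] at hdisj
  -- T sits inside Icc 1 n \ T'
  have hTsub : T ⊆ Finset.Icc 1 n \ T' := by
    intro x hx
    refine Finset.mem_sdiff.mpr ⟨hT hx, fun hx' => ?_⟩
    have : x ∈ T ∩ T' := Finset.mem_inter.mpr ⟨hx, hx'⟩
    simp [hdisj] at this
  have hcard : k ≤ (Finset.Icc 1 n \ T').card := by
    have h1 : T' ⊆ Finset.Icc 1 n := hT'
    have := Finset.card_sdiff_of_subset h1
    rw [this, Nat.card_Icc]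
    omega
  obtain ⟨G, hTG, hGsub, hGcard⟩ :=
    Finset.exists_subsuperset_card_eq hTsub hTk hcard
  have hGIcc : G ⊆ Finset.Icc 1 n := hGsub.trans (Finset.sdiff_subset)
  have hGH : G ∈ H := by
    by_contra hGH
    obtain ⟨F, hF, hFG⟩ := hsat G hGIcc hGcard hGH
    obtain ⟨x, hx⟩ := hcov F hF
    rw [Finset.mem_inter] at hx
    have : x ∈ F ∩ G := Finset.mem_inter.mpr ⟨hx.2, hTG hx.1⟩
    simp [hFG] at this
  obtain ⟨x, hx⟩ := hcov' G hGH
  rw [Finset.mem_inter] at hx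
  have := hGsub hx.2
  rw [Finset.mem_sdiff] at this
  exact this.2 hx.1
end

section
/- Let H ⊆ ([2,n] choose k) be an intersecting family with covering number τ(H) = r−1, and define F_H = H ∪ {F ∈ ([n] choose k) : 1 ∈ F and T ⊆ F for some cover T of H with |T| ≤ k}. Then F_H is intersecting and τ(F_H) ≤ r. -/
/-- Given an intersecting family `H ⊆ ([2,n] choose k)` with covering number `r - 1`,
the family `F_H = H ∪ {F ∈ ([n] choose k) : 1 ∈ F, ∃ cover T of H with |T| ≤ k, T ⊆ F}`
is intersecting and has covering number at most `r`. -/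
theorem example_family_intersecting
    (n k r : ℕ) (hr : 1 ≤ r)
    (H : Finset (Finset ℕ))
    (hHsub : ∀ F ∈ H, F ⊆ Finset.Icc 2 n ∧ F.card = k)
    (hint : ∀ F ∈ H, ∀ F' ∈ H, (F ∩ F').Nonempty)
    -- τ(H) = r - 1 : there is a cover of size r - 1, and no smaller set covers H
    (hcov : ∃ T ⊆ Finset.Icc 1 n, T.card = r - 1 ∧ ∀ F ∈ H, (T ∩ F).Nonempty)
    (hτ : ∀ S ⊆ Finset.Icc 1 n, S.card < r - 1 → ∃ F ∈ H, S ∩ F = ∅)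
    (FH : Finset (Finset ℕ))
    (hFH : ∀ F : Finset ℕ, F ∈ FH ↔ F ∈ H ∨
      (F ⊆ Finset.Icc 1 n ∧ F.card = k ∧ 1 ∈ F ∧
        ∃ T, T.card ≤ k ∧ (∀ E ∈ H, (T ∩ E).Nonempty) ∧ T ⊆ F)) :
    (∀ F ∈ FH, ∀ F' ∈ FH, (F ∩ F').Nonempty) ∧
      (∃ T ⊆ Finset.Icc 1 n, T.card ≤ r ∧ ∀ F ∈ FH, (T ∩ F).Nonempty) := by
  constructor
  · -- intersecting
    intro F hF F' hF'
    rcases (hFH F).1 hF with hF | ⟨_, _, h1F, T, _, hTcov, hTF⟩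
    · rcases (hFH F').1 hF' with hF' | ⟨_, _, h1F', T', _, hTcov', hTF'⟩
      · exact hint F hF F' hF'
      · obtain ⟨x, hx⟩ := hTcov' F hF
        simp only [Finset.mem_inter] at hx
        exact ⟨x, Finset.mem_inter.2 ⟨hx.2, hTF' hx.1⟩⟩
    · rcases (hFH F').1 hF' with hF' | ⟨_, _, h1F', T', _, hTcov', hTF'⟩
      · obtain ⟨x, hx⟩ := hTcov F' hF'
        simp only [Finset.mem_inter] at hx
        exact ⟨x, Finset.mem_inter.2 ⟨hTF hx.1, hx.2⟩⟩
      · exact ⟨1, Finset.mem_inter.2 ⟨h1F, h1F'⟩⟩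
  · -- cover
    rcases Nat.eq_zero_or_pos n with hn | hn
    · -- n = 0: FH is empty
      refine ⟨∅, Finset.empty_subset _, by simp, ?_⟩
      intro F hF
      exfalso
      rcases (hFH F).1 hF with hF | ⟨hFsub, _, h1F, _⟩
      · have hE := (hHsub F hF).1
        have : F = ∅ := by
          subst hn
          simpa using Finset.subset_empty.1 (by simpa using hE)
        obtain ⟨x, hx⟩ := hint F hF F hF
        simp [this] at hx
      · have := hFsub h1F
        simp [hn] at this
    · obtain ⟨T, hTsub, hTcard, hTcov⟩ := hcov
      refine ⟨insert 1 T, ?_, ?_, ?_⟩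
      · intro x hx
        rcases Finset.mem_insert.1 hx with rfl | hx
        · exact Finset.mem_Icc.2 ⟨le_refl 1, hn⟩
        · exact hTsub hx
      · calc (insert 1 T).card ≤ T.card + 1 := Finset.card_insert_le _ _
          _ = r - 1 + 1 := by rw [hTcard]
          _ = r := Nat.succ_pred_eq_of_pos hr
      · intro F hF
        rcases (hFH F).1 hF with hF | ⟨_, _, h1F, _⟩
        · obtain ⟨x, hx⟩ := hTcov F hF
          simp only [Finset.mem_inter] at hx
          exact ⟨x, Finset.mem_inter.2 ⟨Finset.mem_insert_of_mem hx.1, hx.2⟩⟩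
        · exact ⟨1, Finset.mem_inter.2 ⟨Finset.mem_insert_self _ _, h1F⟩⟩
end

section
/- For n ≥ 2k, the family G(n,k) = A ∪ B, where B = {[2,k+1], {2}∪[k+2,2k], {3}∪[k+2,2k]} and A = {A ∈ ([n] choose k) : 1 ∈ A and A ∩ B ≠ ∅ for each B ∈ B}, is an intersecting k-uniform family with covering number exactly 3. -/
/-- For `n ≥ 2k` (and `k ≥ 3`), the family `G(n,k) = A ∪ B` with
`B = {[2,k+1], {2} ∪ [k+2,2k], {3} ∪ [k+2,2k]}` and
`A = {A ∈ ([n] choose k) : 1 ∈ A, A ∩ B ≠ ∅ for all B ∈ B}`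
is an intersecting `k`-uniform family with covering number exactly `3`. -/
theorem Gnk_intersecting_tau_three
    (n k : ℕ) (hk : 3 ≤ k) (hnk : 2 * k ≤ n)
    (B : Finset (Finset ℕ))
    (hB : B = {Finset.Icc 2 (k + 1),
               insert 2 (Finset.Icc (k + 2) (2 * k)),
               insert 3 (Finset.Icc (k + 2) (2 * k))})
    (G : Finset (Finset ℕ))
    (hG : ∀ F : Finset ℕ, F ∈ G ↔ F ∈ B ∨
      (F ⊆ Finset.Icc 1 n ∧ F.card = k ∧ 1 ∈ F ∧ ∀ E ∈ B, (F ∩ E).Nonempty)) :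
    (∀ F ∈ G, F ⊆ Finset.Icc 1 n ∧ F.card = k) ∧
    (∀ F ∈ G, ∀ F' ∈ G, (F ∩ F').Nonempty) ∧
    IsLeast {m : ℕ | ∃ S ⊆ Finset.Icc 1 n, S.card = m ∧ ∀ F ∈ G, (S ∩ F).Nonempty} 3 := by
  set I : Finset ℕ := Finset.Icc (k+2) (2*k) with hI
  set B1 : Finset ℕ := Finset.Icc 2 (k+1) with hB1
  set B2 : Finset ℕ := insert 2 I with hB2
  set B3 : Finset ℕ := insert 3 I with hB3
  have hmemB : ∀ E, E ∈ B ↔ E = B1 ∨ E = B2 ∨ E = B3 := by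
    intro E; simp [hB]
  have hIcard : I.card = k - 1 := by rw [hI, Nat.card_Icc]; omega
  have h2I : (2:ℕ) ∉ I := by intro h; rw [hI, Finset.mem_Icc] at h; omega
  have h3I : (3:ℕ) ∉ I := by intro h; rw [hI, Finset.mem_Icc] at h; omega
  have hB1card : B1.card = k := by rw [hB1, Nat.card_Icc]; omega
  have hB2card : B2.card = k := by rw [hB2, Finset.card_insert_of_notMem h2I, hIcard]; omega
  have hB3card : B3.card = k := by rw [hB3, Finset.card_insert_of_notMem h3I, hIcard]; omega
  have hIsub : I ⊆ Finset.Icc 1 n := by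
    intro x hx; rw [hI, Finset.mem_Icc] at hx; rw [Finset.mem_Icc]; omega
  have hB1sub : B1 ⊆ Finset.Icc 1 n := by
    intro x hx; rw [hB1, Finset.mem_Icc] at hx; rw [Finset.mem_Icc]; omega
  have hB2sub : B2 ⊆ Finset.Icc 1 n := by
    intro x hx; rw [hB2, Finset.mem_insert] at hx
    rcases hx with rfl | hx
    · rw [Finset.mem_Icc]; omega
    · exact hIsub hx
  have hB3sub : B3 ⊆ Finset.Icc 1 n := by
    intro x hx; rw [hB3, Finset.mem_insert] at hx
    rcases hx with rfl | hx
    · rw [Finset.mem_Icc]; omega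
    · exact hIsub hx
  -- membership facts
  have h2B1 : (2:ℕ) ∈ B1 := by rw [hB1, Finset.mem_Icc]; omega
  have h3B1 : (3:ℕ) ∈ B1 := by rw [hB1, Finset.mem_Icc]; omega
  have h2B2 : (2:ℕ) ∈ B2 := Finset.mem_insert_self _ _
  have h3B3 : (3:ℕ) ∈ B3 := Finset.mem_insert_self _ _
  have hk2I : (k+2) ∈ I := by rw [hI, Finset.mem_Icc]; omega
  have hk2B2 : (k+2) ∈ B2 := Finset.mem_insert_of_mem hk2I
  have hk2B3 : (k+2) ∈ B3 := Finset.mem_insert_of_mem hk2I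
  have h1B1 : (1:ℕ) ∉ B1 := by rw [hB1, Finset.mem_Icc]; omega
  have h1B2 : (1:ℕ) ∉ B2 := by
    rw [hB2, Finset.mem_insert, hI, Finset.mem_Icc]; omega
  have h1B3 : (1:ℕ) ∉ B3 := by
    rw [hB3, Finset.mem_insert, hI, Finset.mem_Icc]; omega
  refine ⟨?_, ?_, ?_, ?_⟩
  · -- uniformity
    intro F hF
    rcases (hG F).1 hF with hFB | ⟨hs, hc, _⟩
    · rcases (hmemB F).1 hFB with rfl | rfl | rfl
      · exact ⟨hB1sub, hB1card⟩
      · exact ⟨hB2sub, hB2card⟩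
      · exact ⟨hB3sub, hB3card⟩
    · exact ⟨hs, hc⟩
  · -- intersecting
    have key : ∀ E ∈ B, ∀ E' ∈ B, (E ∩ E').Nonempty := by
      intro E hE E' hE'
      rcases (hmemB E).1 hE with rfl | rfl | rfl <;>
        rcases (hmemB E').1 hE' with rfl | rfl | rfl
      · exact ⟨2, Finset.mem_inter.2 ⟨h2B1, h2B1⟩⟩
      · exact ⟨2, Finset.mem_inter.2 ⟨h2B1, h2B2⟩⟩
      · exact ⟨3, Finset.mem_inter.2 ⟨h3B1, h3B3⟩⟩
      · exact ⟨2, Finset.mem_inter.2 ⟨h2B2, h2B1⟩⟩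
      · exact ⟨2, Finset.mem_inter.2 ⟨h2B2, h2B2⟩⟩
      · exact ⟨k+2, Finset.mem_inter.2 ⟨hk2B2, hk2B3⟩⟩
      · exact ⟨3, Finset.mem_inter.2 ⟨h3B3, h3B1⟩⟩
      · exact ⟨k+2, Finset.mem_inter.2 ⟨hk2B3, hk2B2⟩⟩
      · exact ⟨3, Finset.mem_inter.2 ⟨h3B3, h3B3⟩⟩
    intro F hF F' hF'
    rcases (hG F).1 hF with hFB | ⟨_, _, h1F, hFhits⟩
    · rcases (hG F').1 hF' with hFB' | ⟨_, _, _, hFhits'⟩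
      · exact key F hFB F' hFB'
      · rw [Finset.inter_comm]; exact hFhits' F hFB
    · rcases (hG F').1 hF' with hFB' | ⟨_, _, h1F', _⟩
      · exact hFhits F' hFB'
      · exact ⟨1, Finset.mem_inter.2 ⟨h1F, h1F'⟩⟩
  · -- {1,2,3} is a cover
    refine ⟨{1,2,3}, ?_, ?_, ?_⟩
    · intro x hx
      simp only [Finset.mem_insert, Finset.mem_singleton] at hx
      rw [Finset.mem_Icc]; omega
    · decide
    · intro F hF
      have m1 : (1:ℕ) ∈ ({1,2,3} : Finset ℕ) := by decide
      have m2 : (2:ℕ) ∈ ({1,2,3} : Finset ℕ) := by decide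
      have m3 : (3:ℕ) ∈ ({1,2,3} : Finset ℕ) := by decide
      rcases (hG F).1 hF with hFB | ⟨_, _, h1F, _⟩
      · rcases (hmemB F).1 hFB with rfl | rfl | rfl
        · exact ⟨2, Finset.mem_inter.2 ⟨m2, h2B1⟩⟩
        · exact ⟨2, Finset.mem_inter.2 ⟨m2, h2B2⟩⟩
        · exact ⟨3, Finset.mem_inter.2 ⟨m3, h3B3⟩⟩
      · exact ⟨1, Finset.mem_inter.2 ⟨m1, h1F⟩⟩
  · -- lower bound
    rintro m ⟨S, hSsub, hScard, hScover⟩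
    by_contra hlt
    have hS2 : S.card ≤ 2 := by omega
    have hB1G : B1 ∈ G := (hG B1).2 (Or.inl ((hmemB B1).2 (Or.inl rfl)))
    have hB2G : B2 ∈ G := (hG B2).2 (Or.inl ((hmemB B2).2 (Or.inr (Or.inl rfl))))
    have hB3G : B3 ∈ G := (hG B3).2 (Or.inl ((hmemB B3).2 (Or.inr (Or.inr rfl))))
    by_cases h1S : 1 ∈ S
    · obtain ⟨s1, hs1⟩ := hScover B1 hB1G
      obtain ⟨s2, hs2⟩ := hScover B2 hB2G
      obtain ⟨s3, hs3⟩ := hScover B3 hB3G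
      rw [Finset.mem_inter] at hs1 hs2 hs3
      have e1 : s1 ∈ S.erase 1 :=
        Finset.mem_erase.2 ⟨fun h => h1B1 (h ▸ hs1.2), hs1.1⟩
      have e2 : s2 ∈ S.erase 1 :=
        Finset.mem_erase.2 ⟨fun h => h1B2 (h ▸ hs2.2), hs2.1⟩
      have e3 : s3 ∈ S.erase 1 :=
        Finset.mem_erase.2 ⟨fun h => h1B3 (h ▸ hs3.2), hs3.1⟩
      have hce : (S.erase 1).card ≤ 1 := by
        rw [Finset.card_erase_of_mem h1S]; omega
      have h12 : s1 = s2 := Finset.card_le_one.1 hce _ e1 _ e2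
      have h13 : s1 = s3 := Finset.card_le_one.1 hce _ e1 _ e3
      have q1 : 2 ≤ s1 ∧ s1 ≤ k+1 := by
        have := hs1.2; rw [hB1, Finset.mem_Icc] at this; exact this
      have q2 : s1 = 2 ∨ (k+2 ≤ s1 ∧ s1 ≤ 2*k) := by
        have := h12 ▸ hs2.2
        rw [hB2, Finset.mem_insert, hI, Finset.mem_Icc] at this; exact this
      have q3 : s1 = 3 ∨ (k+2 ≤ s1 ∧ s1 ≤ 2*k) := by
        have := h13 ▸ hs3.2
        rw [hB3, Finset.mem_insert, hI, Finset.mem_Icc] at this; exact this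
      omega
    · -- 1 ∉ S : construct an A-type set avoiding S
      obtain ⟨s, hs⟩ := hScover B1 hB1G
      rw [Finset.mem_inter] at hs
      have hsk : 2 ≤ s ∧ s ≤ k+1 := by
        have := hs.2; rw [hB1, Finset.mem_Icc] at this; exact this
      -- pick b ∈ B1 \ S
      have hbne : (B1 \ S).Nonempty := by
        rw [← Finset.card_pos]
        have := Finset.le_card_sdiff S B1
        omega
      obtain ⟨b, hb⟩ := hbne
      rw [Finset.mem_sdiff] at hb
      have hbk : 2 ≤ b ∧ b ≤ k+1 := by
        have := hb.1; rw [hB1, Finset.mem_Icc] at this; exact this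
      -- I ∩ S has at most one element
      have hIS : (I ∩ S).card ≤ 1 := by
        have hsub : I ∩ S ⊆ S.erase s := by
          intro x hx
          rw [Finset.mem_inter] at hx
          refine Finset.mem_erase.2 ⟨?_, hx.2⟩
          intro h
          have := h ▸ hx.1
          rw [hI, Finset.mem_Icc] at this; omega
        have := Finset.card_le_card hsub
        have := Finset.card_erase_of_mem hs.1
        omega
      have hISd : k - 2 ≤ (I \ S).card := by
        have := Finset.card_inter_add_card_sdiff I S
        omega
      obtain ⟨T, hTsub, hTcard⟩ := Finset.exists_subset_card_eq hISd
      have hT : ∀ t ∈ T, (k+2 ≤ t ∧ t ≤ 2*k) ∧ t ∉ S := by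
        intro t ht
        have := hTsub ht
        rw [Finset.mem_sdiff, hI, Finset.mem_Icc] at this
        exact this
      have hbT : b ∉ T := fun h => by have := (hT b h).1; omega
      have h1bT : (1:ℕ) ∉ insert b T := by
        rw [Finset.mem_insert]
        rintro (h | h)
        · omega
        · have := (hT 1 h).1; omega
      set F : Finset ℕ := insert 1 (insert b T) with hF
      have hTne : T.Nonempty := by rw [← Finset.card_pos]; omega
      obtain ⟨t0, ht0⟩ := hTne
      have hFG : F ∈ G := by
        refine (hG F).2 (Or.inr ⟨?_, ?_, Finset.mem_insert_self _ _, ?_⟩)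
        · intro x hx
          rw [hF, Finset.mem_insert, Finset.mem_insert] at hx
          rw [Finset.mem_Icc]
          rcases hx with rfl | rfl | hx
          · omega
          · omega
          · have := (hT x hx).1; omega
        · rw [hF, Finset.card_insert_of_notMem h1bT,
            Finset.card_insert_of_notMem hbT, hTcard]
          omega
        · intro E hE
          have hbF : b ∈ F := Finset.mem_insert_of_mem (Finset.mem_insert_self _ _)
          have ht0F : t0 ∈ F :=
            Finset.mem_insert_of_mem (Finset.mem_insert_of_mem ht0)
          have ht0I : t0 ∈ I := by
            rw [hI, Finset.mem_Icc]; exact (hT t0 ht0).1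
          rcases (hmemB E).1 hE with rfl | rfl | rfl
          · exact ⟨b, Finset.mem_inter.2 ⟨hbF, by rw [hB1, Finset.mem_Icc]; omega⟩⟩
          · exact ⟨t0, Finset.mem_inter.2 ⟨ht0F, Finset.mem_insert_of_mem ht0I⟩⟩
          · exact ⟨t0, Finset.mem_inter.2 ⟨ht0F, Finset.mem_insert_of_mem ht0I⟩⟩
      obtain ⟨x, hx⟩ := hScover F hFG
      rw [Finset.mem_inter, hF, Finset.mem_insert, Finset.mem_insert] at hx
      rcases hx.2 with rfl | rfl | hxT
      · exact h1S hx.1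
      · exact hb.2 hx.1
      · exact (hT x hxT).2 hx.1
end

section
/- For n ≥ 2k, with B = {[2,k+1], {2}∪[k+2,2k], {3}∪[k+2,2k]} and A = {A ∈ ([n] choose k) : 1 ∈ A, A ∩ B ≠ ∅ for all B ∈ B}, the family G(n,k) = A ∪ B satisfies |G(n,k)| = C(n−1,k−1) − C(n−k,k−1) − C(n−k−1,k−1) + C(n−2k,k−1) + C(n−k−2,k−3) + 3. -/
open Finset
private lemma count_avoid (S T : Finset ℕ) (m : ℕ) (hTS : T ⊆ S) :
    ((S.powersetCard m).filter (fun F => F ∩ T = ∅)).card = (S.card - T.card).choose m := by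
  have h : (S.powersetCard m).filter (fun F => F ∩ T = ∅) = (S \ T).powersetCard m := by
    ext F
    simp only [mem_filter, mem_powersetCard, subset_sdiff, ← disjoint_iff_inter_eq_empty]
    tauto
  rw [h, card_powersetCard, card_sdiff_of_subset hTS]

private lemma pascal3 (p q : ℕ) :
    (p+2).choose (q+2) + p.choose (q+2) = 2 * (p+1).choose (q+2) + p.choose q := by
  have h1 : (p+2).choose (q+2) = (p+1).choose (q+1) + (p+1).choose (q+2) :=
    Nat.choose_succ_succ (p+1) (q+1)
  have h2 : (p+1).choose (q+1) = p.choose q + p.choose (q+1) := Nat.choose_succ_succ p q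
  have h3 : (p+1).choose (q+2) = p.choose (q+1) + p.choose (q+2) :=
    Nat.choose_succ_succ p (q+1)
  omega

/-- For `n ≥ 2k` (and `k ≥ 3`), the family `G(n,k) = A ∪ B` satisfies
`|G(n,k)| = C(n-1,k-1) - C(n-k,k-1) - C(n-k-1,k-1) + C(n-2k,k-1) + C(n-k-2,k-3) + 3`. -/
theorem Gnk_card
    (n k : ℕ) (hk : 3 ≤ k) (hnk : 2 * k ≤ n)
    (B : Finset (Finset ℕ))
    (hB : B = {Finset.Icc 2 (k + 1),
               insert 2 (Finset.Icc (k + 2) (2 * k)),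
               insert 3 (Finset.Icc (k + 2) (2 * k))})
    (G : Finset (Finset ℕ))
    (hG : ∀ F : Finset ℕ, F ∈ G ↔ F ∈ B ∨
      (F ⊆ Finset.Icc 1 n ∧ F.card = k ∧ 1 ∈ F ∧ ∀ E ∈ B, (F ∩ E).Nonempty)) :
    (G.card : ℤ) = (n - 1).choose (k - 1) - (n - k).choose (k - 1)
      - (n - k - 1).choose (k - 1) + (n - 2 * k).choose (k - 1)
      + (n - k - 2).choose (k - 3) + 3 := by
  set E₁ := Finset.Icc 2 (k + 1) with hE1
  set E₂ := insert 2 (Finset.Icc (k + 2) (2 * k)) with hE2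
  set E₃ := insert 3 (Finset.Icc (k + 2) (2 * k)) with hE3
  set S := Finset.Icc 2 n with hSdef
  set U := S.powersetCard (k - 1) with hUdef
  set W := U.filter (fun F => (F ∩ E₁).Nonempty ∧ (F ∩ E₂).Nonempty ∧ (F ∩ E₃).Nonempty)
    with hWdef
  -- basic membership facts
  have h1E1 : (1:ℕ) ∉ E₁ := by simp only [hE1, Finset.mem_Icc]; omega
  have h1E2 : (1:ℕ) ∉ E₂ := by simp only [hE2, mem_insert, Finset.mem_Icc]; omega
  have h1E3 : (1:ℕ) ∉ E₃ := by simp only [hE3, mem_insert, Finset.mem_Icc]; omega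
  have h1B : ∀ F ∈ B, (1:ℕ) ∉ F := by
    rw [hB]; intro F hF
    simp only [mem_insert, mem_singleton] at hF
    rcases hF with rfl | rfl | rfl <;> assumption
  -- the A-part equals the image of W under insert 1
  have hAiff : ∀ F : Finset ℕ,
      (F ⊆ Finset.Icc 1 n ∧ F.card = k ∧ 1 ∈ F ∧ ∀ E ∈ B, (F ∩ E).Nonempty) ↔
      F ∈ W.image (insert 1) := by
    intro F
    simp only [hB, mem_insert, mem_singleton, forall_eq_or_imp, forall_eq]
    constructor
    · rintro ⟨hsub, hcard, h1F, hm1, hm2, hm3⟩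
      refine mem_image.2 ⟨F.erase 1, ?_, insert_erase h1F⟩
      have herase : ∀ E : Finset ℕ, (1:ℕ) ∉ E → (F ∩ E).Nonempty →
          ((F.erase 1) ∩ E).Nonempty := by
        intro E h1E ⟨x, hx⟩
        rw [mem_inter] at hx
        exact ⟨x, mem_inter.2 ⟨mem_erase.2 ⟨fun h => h1E (h ▸ hx.2), hx.1⟩, hx.2⟩⟩
      refine mem_filter.2 ⟨mem_powersetCard.2 ⟨?_, ?_⟩, herase _ h1E1 hm1,
        herase _ h1E2 hm2, herase _ h1E3 hm3⟩
      · intro x hx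
        rw [mem_erase] at hx
        have hxn := hsub hx.2
        rw [Finset.mem_Icc] at hxn
        simp only [hSdef, Finset.mem_Icc]
        omega
      · rw [card_erase_of_mem h1F, hcard]
    · intro hF
      obtain ⟨F', hF', rfl⟩ := mem_image.1 hF
      rw [hWdef, mem_filter, hUdef, mem_powersetCard] at hF'
      obtain ⟨⟨hsub, hcard⟩, hm1, hm2, hm3⟩ := hF'
      have hsub' : ∀ x ∈ F', 2 ≤ x ∧ x ≤ n := by
        intro x hx
        have := hsub hx
        simp only [hSdef, Finset.mem_Icc] at this
        exact this
      have h1F' : (1:ℕ) ∉ F' := fun h => by have := hsub' 1 h; omega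
      have hmono : ∀ E : Finset ℕ, (F' ∩ E).Nonempty → ((insert 1 F') ∩ E).Nonempty :=
        fun E h => h.mono (inter_subset_inter (subset_insert _ _) le_rfl)
      refine ⟨?_, ?_, mem_insert_self _ _, hmono _ hm1, hmono _ hm2, hmono _ hm3⟩
      · intro x hx
        rw [mem_insert] at hx
        rw [Finset.mem_Icc]
        rcases hx with rfl | hx
        · omega
        · have := hsub' x hx; omega
      · rw [card_insert_of_notMem h1F', hcard]; omega
  have hGeq : G = B ∪ W.image (insert 1) := by
    ext F
    rw [hG F, mem_union, hAiff F]
  -- cardinalities of the structural decomposition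
  have hdisj : Disjoint B (W.image (insert 1)) := by
    rw [disjoint_left]
    intro F hFB hFA
    obtain ⟨F', _, rfl⟩ := mem_image.1 hFA
    exact h1B _ hFB (mem_insert_self _ _)
  have hBcard : B.card = 3 := by
    have h3E1 : (3:ℕ) ∈ E₁ := by simp only [hE1, Finset.mem_Icc]; omega
    have h3E2 : (3:ℕ) ∉ E₂ := by simp only [hE2, mem_insert, Finset.mem_Icc]; omega
    have h2E1 : (2:ℕ) ∈ E₁ := by simp only [hE1, Finset.mem_Icc]; omega
    have h2E3 : (2:ℕ) ∉ E₃ := by simp only [hE3, mem_insert, Finset.mem_Icc]; omega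
    have h2E2 : (2:ℕ) ∈ E₂ := mem_insert_self _ _
    rw [hB]
    rw [card_insert_of_notMem, card_insert_of_notMem, card_singleton]
    · simp only [mem_singleton]
      exact fun h => h2E3 (h ▸ h2E2)
    · simp only [mem_insert, mem_singleton]
      rintro (h | h)
      · exact h3E2 (h ▸ h3E1)
      · exact h2E3 (h ▸ h2E1)
  have himg : (W.image (insert 1)).card = W.card := by
    apply card_image_of_injOn
    intro a ha b hb hab
    have hno : ∀ c ∈ W, (1:ℕ) ∉ c := by
      intro c hc h1c
      rw [hWdef, mem_filter, hUdef, mem_powersetCard] at hc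
      have := hc.1.1 h1c
      simp only [hSdef, Finset.mem_Icc] at this
      omega
    have h := congrArg (Finset.erase · 1) hab
    rwa [erase_insert (hno a ha), erase_insert (hno b hb)] at h
  have hGcard : G.card = W.card + 3 := by
    rw [hGeq, card_union_of_disjoint hdisj, hBcard, himg]
    omega
  -- now count W by inclusion-exclusion
  have hScard : S.card = n - 1 := by rw [hSdef, Nat.card_Icc]; omega
  have hUcard : U.card = (n - 1).choose (k - 1) := by
    rw [hUdef, card_powersetCard, hScard]
  set X1 := U.filter (fun F => F ∩ E₁ = ∅) with hX1def
  set X2 := U.filter (fun F => F ∩ E₂ = ∅) with hX2def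
  set X3 := U.filter (fun F => F ∩ E₃ = ∅) with hX3def
  set T12 := Finset.Icc 2 (2 * k) with hT12def
  set T23 := insert 2 E₃ with hT23def
  set Y := U.filter (fun F => F ∩ T12 = ∅) with hYdef
  set Z := U.filter (fun F => F ∩ T23 = ∅) with hZdef
  -- subset facts
  have hE1S : E₁ ⊆ S := by
    intro x hx; simp only [hE1, Finset.mem_Icc] at hx
    simp only [hSdef, Finset.mem_Icc]; omega
  have hE2S : E₂ ⊆ S := by
    intro x hx; simp only [hE2, mem_insert, Finset.mem_Icc] at hx
    simp only [hSdef, Finset.mem_Icc]; omega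
  have hE3S : E₃ ⊆ S := by
    intro x hx; simp only [hE3, mem_insert, Finset.mem_Icc] at hx
    simp only [hSdef, Finset.mem_Icc]; omega
  have hT12S : T12 ⊆ S := by
    intro x hx; simp only [hT12def, Finset.mem_Icc] at hx
    simp only [hSdef, Finset.mem_Icc]; omega
  have hT23S : T23 ⊆ S := by
    intro x hx; simp only [hT23def, hE3, mem_insert, Finset.mem_Icc] at hx
    simp only [hSdef, Finset.mem_Icc]; omega
  -- card facts for the avoided sets
  have hIcard : (Finset.Icc (k + 2) (2 * k)).card = k - 1 := by rw [Nat.card_Icc]; omega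
  have hE1card : E₁.card = k := by rw [hE1, Nat.card_Icc]; omega
  have hE2card : E₂.card = k := by
    rw [hE2, card_insert_of_notMem (by simp only [Finset.mem_Icc]; omega), hIcard]; omega
  have hE3card : E₃.card = k := by
    rw [hE3, card_insert_of_notMem (by simp only [Finset.mem_Icc]; omega), hIcard]; omega
  have hT12card : T12.card = 2 * k - 1 := by rw [hT12def, Nat.card_Icc]; omega
  have hT23card : T23.card = k + 1 := by
    have h2E3 : (2:ℕ) ∉ E₃ := by simp only [hE3, mem_insert, Finset.mem_Icc]; omega
    rw [hT23def, card_insert_of_notMem h2E3, hE3card]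
  -- counts
  have hX1card : X1.card = (n - k - 1).choose (k - 1) := by
    rw [hX1def, hUdef, count_avoid S E₁ _ hE1S, hScard, hE1card]
    congr 1; omega
  have hX2card : X2.card = (n - k - 1).choose (k - 1) := by
    rw [hX2def, hUdef, count_avoid S E₂ _ hE2S, hScard, hE2card]
    congr 1; omega
  have hX3card : X3.card = (n - k - 1).choose (k - 1) := by
    rw [hX3def, hUdef, count_avoid S E₃ _ hE3S, hScard, hE3card]
    congr 1; omega
  have hYcard : Y.card = (n - 2 * k).choose (k - 1) := by
    rw [hYdef, hUdef, count_avoid S T12 _ hT12S, hScard, hT12card]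
    congr 1; omega
  have hZcard : Z.card = (n - k - 2).choose (k - 1) := by
    rw [hZdef, hUdef, count_avoid S T23 _ hT23S, hScard, hT23card]
    congr 1; omega
  -- intersections
  have hE12 : E₁ ∪ E₂ = T12 := by
    ext x; simp [hE1, hE2, hT12def, Finset.mem_Icc]; omega
  have hE13 : E₁ ∪ E₃ = T12 := by
    ext x; simp [hE1, hE3, hT12def, Finset.mem_Icc]; omega
  have hE23 : E₂ ∪ E₃ = T23 := by
    ext x; simp [hE2, hE3, hT23def, Finset.mem_Icc]; omega
  have hfilter_inter : ∀ A C : Finset ℕ,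
      (U.filter (fun F => F ∩ A = ∅)) ∩ (U.filter (fun F => F ∩ C = ∅)) =
      U.filter (fun F => F ∩ (A ∪ C) = ∅) := by
    intro A C
    ext F
    simp only [mem_inter, mem_filter, inter_union_distrib_left, union_eq_empty]
    tauto
  have hX12 : X1 ∩ X2 = Y := by rw [hX1def, hX2def, hfilter_inter, hE12]
  have hX13 : X1 ∩ X3 = Y := by rw [hX1def, hX3def, hfilter_inter, hE13]
  have hX23 : X2 ∩ X3 = Z := by rw [hX2def, hX3def, hfilter_inter, hE23]
  have hT23T12 : T23 ⊆ T12 := by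
    intro x hx
    simp only [hT23def, hE3, mem_insert, Finset.mem_Icc] at hx
    simp only [hT12def, Finset.mem_Icc]; omega
  have hYZ : Y ∩ Z = Y := by
    apply inter_eq_left.2
    intro F hF
    rw [hYdef, mem_filter] at hF
    rw [hZdef, mem_filter]
    refine ⟨hF.1, ?_⟩
    have hsub : F ∩ T23 ⊆ F ∩ T12 := inter_subset_inter (Finset.Subset.refl F) hT23T12
    rw [hF.2] at hsub
    exact subset_empty.1 hsub
  -- complement count
  have hcomp : W.card + (X1 ∪ (X2 ∪ X3)).card = U.card := by
    have h := card_filter_add_card_filter_not (s := U)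
      (p := fun F => (F ∩ E₁).Nonempty ∧ (F ∩ E₂).Nonempty ∧ (F ∩ E₃).Nonempty)
    have hneg : U.filter
        (fun F => ¬((F ∩ E₁).Nonempty ∧ (F ∩ E₂).Nonempty ∧ (F ∩ E₃).Nonempty))
        = X1 ∪ (X2 ∪ X3) := by
      ext F
      simp only [hX1def, hX2def, hX3def, mem_union, mem_filter,
        not_nonempty_iff_eq_empty, not_and_or]
      tauto
    rw [hneg] at h
    exact h
  -- inclusion-exclusion card equations
  have e1 : (X1 ∪ X2).card + Y.card = X1.card + X2.card := by
    rw [← hX12]; exact card_union_add_card_inter _ _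
  have e2 : ((X1 ∪ X2) ∪ X3).card + ((X1 ∪ X2) ∩ X3).card
      = (X1 ∪ X2).card + X3.card := card_union_add_card_inter _ _
  have e3 : (X1 ∪ X2) ∩ X3 = Y ∪ Z := by
    rw [union_inter_distrib_right, hX13, hX23]
  have e4 : (Y ∪ Z).card + Y.card = Y.card + Z.card := by
    have h := card_union_add_card_inter Y Z
    rw [hYZ] at h
    exact h
  have e5 : X1 ∪ (X2 ∪ X3) = (X1 ∪ X2) ∪ X3 := (union_assoc _ _ _).symm
  rw [e5] at hcomp
  rw [e3] at e2
  -- Pascal identity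
  have hpas : (n - k).choose (k - 1) + (n - k - 2).choose (k - 1)
      = 2 * (n - k - 1).choose (k - 1) + (n - k - 2).choose (k - 3) := by
    have h := pascal3 (n - k - 2) (k - 3)
    have f1 : n - k - 2 + 2 = n - k := by omega
    have f2 : n - k - 2 + 1 = n - k - 1 := by omega
    have f3 : k - 3 + 2 = k - 1 := by omega
    rw [f1, f2, f3] at h
    exact h
  rw [hUcard] at hcomp
  rw [hX1card, hX2card] at e1
  rw [hX3card] at e2
  rw [hYcard] at e1 e4
  rw [hZcard] at e4
  rw [hGcard]
  omega
end

section
/- Let F ⊆ ([n] choose k) be a saturated intersecting family with covering number 3, and suppose the family T of 3-element covers of F is nonempty and non-trivial (no common element). Then either T equals the complete 3-uniform hypergraph on some 4 vertices, or T contains three sets isomorphic (as a 3-uniform hypergraph) to S = {{1,2,3},{1,4,5},{2,4,6}} or to R = {{1,2,3},{1,4,5},{2,3,5}}. -/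
/-!
Two disjoint covers `X`, `Y` of size at most `k` cannot exist: extending `X` to a `k`-set `G`
inside the complement of `Y`, saturation forces `G ∈ F`, which `Y` misses. So the 3-covers form
an intersecting 3-uniform family `T`, and the rest is about such families.

If some three members of `T` have no common point, the three points where they pairwise meet,
together with their remaining points, span a copy of `S`, or of `R` when two of the three members
share two points. Otherwise any two members share two points, since a member avoiding the only
common point of two members would give a triple without common point. Then a member `W` avoiding
`v` contains `X.erase v` for every member `X ∋ v`; for members `A`, `B` with `A ⊄ B` this makes
every `(A ∪ B).erase v` a member, and then no member can leave `A ∪ B`.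
-/

open Finset Function

variable {α : Type*}

theorem Set.Finite.exists_injective_eqOn [Infinite α] {s : Set α} (hs : s.Finite) {v : α → α}
    (hv : s.InjOn v) : ∃ f : α → α, Injective f ∧ s.EqOn f v := by
  obtain ⟨g, hg⟩ := Cardinal.extend_function_of_lt ⟨s.domRestrict v, hv.injective⟩
    (hs.lt_aleph0.trans_le (Cardinal.aleph0_le_mk α)) ⟨Equiv.refl α⟩
  exact ⟨g, g.injective, fun x hx => hg ⟨x, hx⟩⟩

theorem List.Nodup.injOn_getD_sub_one {l : List α} (hl : l.Nodup) (d : α) :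
    Set.InjOn (fun i => l.getD (i - 1) d) (Icc 1 l.length : Finset ℕ) := by
  intro i hi j hj hij
  simp only [coe_Icc, Set.mem_Icc] at hi hj
  simp only [List.getD_eq_getElem _ _ (show i - 1 < l.length by omega),
    List.getD_eq_getElem _ _ (show j - 1 < l.length by omega), hl.getElem_inj_iff] at hij
  omega

variable [DecidableEq α]

def HasCopy (T H : Finset (Finset α)) : Prop :=
  ∃ f : α → α, Injective f ∧ ∀ X ∈ H, X.image f ∈ T

theorem hasCopy_of_injOn [Infinite α] {T H : Finset (Finset α)} {s : Finset α} {v : α → α}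
    (hv : Set.InjOn v s) (hHs : ∀ X ∈ H, X ⊆ s) (hHT : ∀ X ∈ H, X.image v ∈ T) :
    HasCopy T H := by
  obtain ⟨f, hf, hfv⟩ := s.finite_toSet.exists_injective_eqOn hv
  exact ⟨f, hf, fun X hX => image_congr (hfv.mono (coe_subset.2 (hHs X hX))) ▸ hHT X hX⟩

theorem Finset.exists_eq_insert_insert_singleton {X : Finset α} (hX : X.card = 3) {p q : α}
    (hp : p ∈ X) (hq : q ∈ X) (hpq : p ≠ q) : ∃ x, x ≠ p ∧ x ≠ q ∧ X = {p, q, x} := by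
  have hq' : q ∈ X.erase p := mem_erase.2 ⟨hpq.symm, hq⟩
  obtain ⟨x, hx⟩ := card_eq_one.1 (by simp [card_erase_of_mem, hp, hq', hX] :
    ((X.erase p).erase q).card = 1)
  have hxX : x ∈ (X.erase p).erase q := hx ▸ mem_singleton_self x
  refine ⟨x, (mem_erase.1 (mem_erase.1 hxX).2).1, (mem_erase.1 hxX).1, ?_⟩
  rw [← hx, insert_erase hq', insert_erase hp]

theorem Finset.erase_subset_of_card_le_card_inter_add_one {X Z : Finset α} {x : α} (hx : x ∈ X)
    (hxZ : x ∉ Z) (h : X.card ≤ (X ∩ Z).card + 1) : X.erase x ⊆ Z := by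
  have heq : X ∩ Z = X.erase x :=
    eq_of_subset_of_card_le (subset_erase.2 ⟨inter_subset_left, fun h => hxZ (mem_inter.1 h).2⟩)
      (by rw [card_erase_of_mem hx]; omega)
  exact heq ▸ inter_subset_right

theorem not_disjoint_of_covers_of_saturated {U X Y : Finset α} {F : Finset (Finset α)} {k : ℕ}
    (hsat : ∀ G ⊆ U, G.card = k → G ∉ F → ∃ A ∈ F, A ∩ G = ∅)
    (hX : ∀ A ∈ F, (X ∩ A).Nonempty) (hY : ∀ A ∈ F, (Y ∩ A).Nonempty)
    (hXU : X ⊆ U) (hXk : X.card ≤ k) (hk : k + Y.card ≤ U.card) : ¬Disjoint X Y := by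
  intro hXY
  obtain ⟨G, hXG, hGU, hGk⟩ := exists_subsuperset_card_eq (subset_sdiff.2 ⟨hXU, hXY⟩) hXk
    (by have := le_card_sdiff Y U; omega)
  have hGF : G ∈ F := by
    by_contra hGF
    obtain ⟨A, hA, hAG⟩ := hsat G (hGU.trans sdiff_subset) hGk hGF
    obtain ⟨t, ht⟩ := hX A hA
    rw [mem_inter] at ht
    exact notMem_empty t (hAG ▸ mem_inter.2 ⟨ht.2, hXG ht.1⟩)
  obtain ⟨t, ht⟩ := hY G hGF
  rw [mem_inter] at ht
  exact (mem_sdiff.1 (hGU ht.2)).2 ht.1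

theorem three_le_card_of_forall_card_le_two_not_cover {U A : Finset α} {F : Finset (Finset α)}
    (hint : ∀ B ∈ F, ∀ B' ∈ F, (B ∩ B').Nonempty)
    (hτ : ∀ S ⊆ U, S.card ≤ 2 → ∃ B ∈ F, S ∩ B = ∅) (hA : A ∈ F) (hAU : A ⊆ U) :
    3 ≤ A.card := by
  by_contra! h
  obtain ⟨A', hA', hAA'⟩ := hτ A hAU (by omega)
  exact (hint A hA A' hA').ne_empty hAA'

section TwoIntersecting

variable {T : Finset (Finset α)}

theorem two_le_card_inter_of_forall_inter_inter_nonempty (hnt : ∀ x, ∃ X ∈ T, x ∉ X)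
    (htri : ∀ X ∈ T, ∀ Y ∈ T, ∀ Z ∈ T, (X ∩ Y ∩ Z).Nonempty) {X Y : Finset α}
    (hX : X ∈ T) (hY : Y ∈ T) : 2 ≤ (X ∩ Y).card := by
  by_contra! h
  obtain ⟨w, hw⟩ := (htri X hX Y hY X hX).mono inter_subset_left
  obtain ⟨Z, hZ, hwZ⟩ := hnt w
  obtain ⟨t, ht⟩ := htri X hX Y hY Z hZ
  rw [mem_inter] at ht
  exact hwZ (card_le_one.1 (by omega) t ht.1 w hw ▸ ht.2)

theorem erase_subset_of_two_le_card_inter (h3 : ∀ X ∈ T, X.card = 3)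
    (h2 : ∀ X ∈ T, ∀ Y ∈ T, 2 ≤ (X ∩ Y).card) {X Z : Finset α} (hX : X ∈ T) (hZ : Z ∈ T)
    {x : α} (hx : x ∈ X) (hxZ : x ∉ Z) : X.erase x ⊆ Z :=
  erase_subset_of_card_le_card_inter_add_one hx hxZ (by have := h2 X hX Z hZ; rw [h3 X hX]; omega)

theorem erase_union_mem_of_two_le_card_inter (h3 : ∀ X ∈ T, X.card = 3)
    (h2 : ∀ X ∈ T, ∀ Y ∈ T, 2 ≤ (X ∩ Y).card) (hnt : ∀ x, ∃ X ∈ T, x ∉ X)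
    {A B : Finset α} (hA : A ∈ T) (hB : B ∈ T) {a : α} (haA : a ∈ A) (haB : a ∉ B)
    {v : α} (hv : v ∈ A ∪ B) : (A ∪ B).erase v ∈ T := by
  have hcard : ((A ∪ B).erase v).card = 3 := by
    have hAB := card_union_add_card_inter A B
    have hinter : (A ∩ B).card ≤ (A.erase a).card :=
      card_le_card (subset_erase.2 ⟨inter_subset_left, fun h => haB (mem_inter.1 h).2⟩)
    have := h2 A hA B hB
    rw [card_erase_of_mem haA, h3 A hA] at hinter
    rw [h3 A hA, h3 B hB] at hAB
    rw [card_erase_of_mem hv]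
    omega
  by_cases hvA : v ∈ A
  · by_cases hvB : v ∈ B
    · obtain ⟨W, hW, hvW⟩ := hnt v
      have hsub : (A ∪ B).erase v ⊆ W := by
        rw [erase_union_distrib]
        exact union_subset (erase_subset_of_two_le_card_inter h3 h2 hA hW hvA hvW)
          (erase_subset_of_two_le_card_inter h3 h2 hB hW hvB hvW)
      rwa [eq_of_subset_of_card_le hsub (by rw [hcard, h3 W hW])]
    · rwa [← eq_of_subset_of_card_le (subset_erase.2 ⟨subset_union_right, hvB⟩)
        (by rw [hcard, h3 B hB])]
  · rwa [← eq_of_subset_of_card_le (subset_erase.2 ⟨subset_union_left, hvA⟩)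
      (by rw [hcard, h3 A hA])]

theorem subset_of_forall_erase_mem (h3 : ∀ X ∈ T, X.card = 3)
    (h2 : ∀ X ∈ T, ∀ Y ∈ T, 2 ≤ (X ∩ Y).card) {V : Finset α} (hV : V.Nonempty)
    (hVT : ∀ v ∈ V, V.erase v ∈ T) {E : Finset α} (hE : E ∈ T) : E ⊆ V := by
  by_contra hEV
  obtain ⟨e, heE, heV⟩ := not_subset.1 hEV
  have hsub : ∀ v ∈ V, E.erase e ⊆ V.erase v := fun v hv =>
    erase_subset_of_two_le_card_inter h3 h2 hE (hVT v hv) heE (fun h => heV (mem_of_mem_erase h))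
  obtain ⟨t, ht⟩ : (E.erase e).Nonempty := by
    rw [← card_pos, card_erase_of_mem heE, h3 E hE]; omega
  obtain ⟨v, hv⟩ := hV
  exact notMem_erase t V (hsub t (mem_of_mem_erase (hsub v hv ht)) ht)

theorem exists_eq_powersetCard_of_forall_inter_inter_nonempty (h3 : ∀ X ∈ T, X.card = 3)
    (hne : T.Nonempty) (hnt : ∀ x, ∃ X ∈ T, x ∉ X)
    (htri : ∀ X ∈ T, ∀ Y ∈ T, ∀ Z ∈ T, (X ∩ Y ∩ Z).Nonempty) :
    ∃ V : Finset α, V.card = 4 ∧ T = V.powersetCard 3 := by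
  have h2 : ∀ X ∈ T, ∀ Y ∈ T, 2 ≤ (X ∩ Y).card := fun _ hX _ hY =>
    two_le_card_inter_of_forall_inter_inter_nonempty hnt htri hX hY
  obtain ⟨A, hA⟩ := hne
  obtain ⟨a, haA⟩ : A.Nonempty := by rw [← card_pos, h3 A hA]; omega
  obtain ⟨B, hB, haB⟩ := hnt a
  have haV : a ∈ A ∪ B := mem_union_left B haA
  have hVT : ∀ v ∈ A ∪ B, (A ∪ B).erase v ∈ T := fun v =>
    erase_union_mem_of_two_le_card_inter h3 h2 hnt hA hB haA haB
  have hV : (A ∪ B).card = 4 := by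
    have := h3 _ (hVT a haV)
    rw [card_erase_of_mem haV] at this
    omega
  refine ⟨A ∪ B, hV, ext fun E => ⟨fun hE => mem_powersetCard.2
    ⟨subset_of_forall_erase_mem h3 h2 ⟨a, haV⟩ hVT hE, h3 E hE⟩, fun hE => ?_⟩⟩
  obtain ⟨hEV, hE3⟩ := mem_powersetCard.1 hE
  obtain ⟨v, hvV, hvE⟩ := exists_of_ssubset (ssubset_of_subset_of_ne hEV (by rintro rfl; omega))
  rw [eq_of_subset_of_card_le (subset_erase.2 ⟨hEV, hvE⟩)
    (by rw [card_erase_of_mem hvV, hV, hE3])]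
  exact hVT v hvV

end TwoIntersecting

def hypergraphS : Finset (Finset ℕ) := {{1, 2, 3}, {1, 4, 5}, {2, 4, 6}}

def hypergraphR : Finset (Finset ℕ) := {{1, 2, 3}, {1, 4, 5}, {2, 3, 5}}

theorem hasCopy_S {T : Finset (Finset ℕ)} {a b c d e g : ℕ} (hl : [a, b, c, d, e, g].Nodup)
    (habc : {a, b, c} ∈ T) (hade : {a, d, e} ∈ T) (hbdg : {b, d, g} ∈ T) :
    HasCopy T hypergraphS := by
  refine hasCopy_of_injOn (hl.injOn_getD_sub_one a) (s := Icc 1 6) (by decide) ?_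
  simp [hypergraphS, habc, hade, hbdg]

theorem hasCopy_R {T : Finset (Finset ℕ)} {a b c d e : ℕ} (hl : [a, b, c, d, e].Nodup)
    (habc : {a, b, c} ∈ T) (hade : {a, d, e} ∈ T) (hbce : {b, c, e} ∈ T) :
    HasCopy T hypergraphR := by
  refine hasCopy_of_injOn (hl.injOn_getD_sub_one a) (s := Icc 1 5) (by decide) ?_
  simp [hypergraphR, habc, hade, hbce]

theorem hasCopy_S_or_hasCopy_R_of_inter_inter_eq_empty {T : Finset (Finset ℕ)}
    {X Y Z : Finset ℕ} (hX : X ∈ T) (hY : Y ∈ T) (hZ : Z ∈ T)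
    (hX3 : X.card = 3) (hY3 : Y.card = 3) (hZ3 : Z.card = 3)
    (hXY : (X ∩ Y).Nonempty) (hXZ : (X ∩ Z).Nonempty) (hYZ : (Y ∩ Z).Nonempty)
    (hXYZ : X ∩ Y ∩ Z = ∅) : HasCopy T hypergraphS ∨ HasCopy T hypergraphR := by
  obtain ⟨p, hp⟩ := hXY
  obtain ⟨q, hq⟩ := hXZ
  obtain ⟨r, hr⟩ := hYZ
  rw [mem_inter] at hp hq hr
  have hnotZ : ∀ t ∈ X, t ∈ Y → t ∉ Z := fun t htX htY htZ =>
    eq_empty_iff_forall_notMem.1 hXYZ t (mem_inter.2 ⟨mem_inter.2 ⟨htX, htY⟩, htZ⟩)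
  obtain ⟨x, hxp, hxq, rfl⟩ := exists_eq_insert_insert_singleton hX3 hp.1 hq.1
    (fun h => hnotZ p hp.1 hp.2 (h ▸ hq.2))
  obtain ⟨y, hyp, hyr, rfl⟩ := exists_eq_insert_insert_singleton hY3 hp.2 hr.1
    (fun h => hnotZ p hp.1 hp.2 (h ▸ hr.2))
  obtain ⟨z, hzq, hzr, rfl⟩ := exists_eq_insert_insert_singleton hZ3 hq.2 hr.2
    (fun h => hnotZ r (h ▸ hq.1) hr.1 hr.2)
  simp only [mem_insert, mem_singleton] at hnotZ
  by_cases hxy : x = y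
  · subst hxy
    refine .inr (hasCopy_R (a := q) (b := p) (c := x) (d := z) (e := r) (by grind [List.nodup_cons]) ?_ ?_ ?_)
    · rwa [insert_comm]
    · rwa [pair_comm]
    · rwa [pair_comm]
  by_cases hxz : x = z
  · subst hxz
    refine .inr (hasCopy_R (a := p) (b := q) (c := x) (d := y) (e := r) (by grind [List.nodup_cons]) hX ?_ ?_)
    · rwa [pair_comm]
    · convert hZ using 1; grind
  by_cases hyz : y = z
  · subst hyz
    refine .inr (hasCopy_R (a := p) (b := r) (c := y) (d := x) (e := q) (by grind [List.nodup_cons]) hY ?_ ?_)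
    · rwa [pair_comm]
    · convert hZ using 1; grind
  exact .inl (hasCopy_S (by grind [List.nodup_cons]) hX hY hZ)

theorem exists_eq_powersetCard_or_hasCopy {T : Finset (Finset ℕ)} (h3 : ∀ X ∈ T, X.card = 3)
    (hint : ∀ X ∈ T, ∀ Y ∈ T, (X ∩ Y).Nonempty) (hne : T.Nonempty) (hnt : ∀ x, ∃ X ∈ T, x ∉ X) :
    (∃ V : Finset ℕ, V.card = 4 ∧ T = V.powersetCard 3) ∨
      HasCopy T hypergraphS ∨ HasCopy T hypergraphR := by
  by_cases htri : ∀ X ∈ T, ∀ Y ∈ T, ∀ Z ∈ T, (X ∩ Y ∩ Z).Nonempty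
  · exact .inl (exists_eq_powersetCard_of_forall_inter_inter_nonempty h3 hne hnt htri)
  push Not at htri
  obtain ⟨X, hX, Y, hY, Z, hZ, hXYZ⟩ := htri
  exact .inr (hasCopy_S_or_hasCopy_R_of_inter_inter_eq_empty hX hY hZ (h3 X hX) (h3 Y hY)
    (h3 Z hZ) (hint X hX Y hY) (hint X hX Z hZ) (hint Y hY Z hZ) hXYZ)

/-- Let `F ⊆ ([n] choose k)` be a saturated intersecting family with covering number `3`
whose family `T` of 3-element covers is nonempty and non-trivial.  Then `T` is the complete
3-uniform hypergraph on some 4 vertices, or `T` contains an isomorphic copy of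
`S = {{1,2,3},{1,4,5},{2,4,6}}` or of `R = {{1,2,3},{1,4,5},{2,3,5}}`. -/
theorem three_covers_structure
    (n k : ℕ) (hnk : 2 * k ≤ n)
    (F : Finset (Finset ℕ))
    (hFsub : ∀ A ∈ F, A ⊆ Finset.Icc 1 n ∧ A.card = k)
    (hint : ∀ A ∈ F, ∀ A' ∈ F, (A ∩ A').Nonempty)
    (hsat : ∀ G ⊆ Finset.Icc 1 n, G.card = k → G ∉ F → ∃ A ∈ F, A ∩ G = ∅)
    -- τ(F) ≥ 3 : no set of size ≤ 2 covers F
    (hτ : ∀ S ⊆ Finset.Icc 1 n, S.card ≤ 2 → ∃ A ∈ F, S ∩ A = ∅)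
    (T : Finset (Finset ℕ))
    (hT : ∀ X : Finset ℕ, X ∈ T ↔
      X ⊆ Finset.Icc 1 n ∧ X.card = 3 ∧ ∀ A ∈ F, (X ∩ A).Nonempty)
    (hne : T.Nonempty)
    (hnontriv : ¬ ∃ x, ∀ X ∈ T, x ∈ X) :
    (∃ V : Finset ℕ, V.card = 4 ∧ T = V.powersetCard 3) ∨
    (∃ f : ℕ → ℕ, Function.Injective f ∧
      ∀ X ∈ ({({1, 2, 3} : Finset ℕ), {1, 4, 5}, {2, 4, 6}} : Finset (Finset ℕ)),
        X.image f ∈ T) ∨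
    (∃ f : ℕ → ℕ, Function.Injective f ∧
      ∀ X ∈ ({({1, 2, 3} : Finset ℕ), {1, 4, 5}, {2, 3, 5}} : Finset (Finset ℕ)),
        X.image f ∈ T) := by
  obtain ⟨A₀, hA₀, -⟩ := hτ ∅ (empty_subset _) (by simp)
  have hk : 3 ≤ k :=
    (hFsub A₀ hA₀).2 ▸ three_le_card_of_forall_card_le_two_not_cover hint hτ hA₀ (hFsub A₀ hA₀).1
  have h3 : ∀ X ∈ T, X.card = 3 := fun X hX => ((hT X).1 hX).2.1
  have hTint : ∀ X ∈ T, ∀ Y ∈ T, (X ∩ Y).Nonempty := fun X hX Y hY => by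
    obtain ⟨hXU, hX3, hXF⟩ := (hT X).1 hX
    obtain ⟨-, hY3, hYF⟩ := (hT Y).1 hY
    exact not_disjoint_iff_nonempty_inter.1 <|
      not_disjoint_of_covers_of_saturated hsat hXF hYF hXU (by omega)
        (by rw [Nat.card_Icc, hY3]; omega)
  push Not at hnontriv
  exact exists_eq_powersetCard_or_hasCopy h3 hTint hne hnontriv
end

section
/- Let T be an intersecting family of 3-element sets that is non-trivial (no common element) and 2-intersecting, i.e., |T ∩ T'| = 2 for all distinct T, T' ∈ T, with |T| ≥ 3. Then T is (up to relabeling) the complete 3-uniform hypergraph on a 4-element set, i.e., T ⊆ ([X] choose 3) for some 4-element set X. -/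
/-- A non-trivial 2-intersecting family of 3-element sets with at least 3 members is
contained in the complete 3-uniform hypergraph on a 4-element set. -/
theorem two_intersecting_three_graph
    (T : Finset (Finset ℕ))
    (huniform : ∀ X ∈ T, X.card = 3)
    (h2int : ∀ X ∈ T, ∀ X' ∈ T, X ≠ X' → (X ∩ X').card = 2)
    (hnontriv : ¬ ∃ x, ∀ X ∈ T, x ∈ X)
    (hcard : 3 ≤ T.card) :
    ∃ V : Finset ℕ, V.card = 4 ∧ ∀ X ∈ T, X ⊆ V := by
  obtain ⟨A, hA, B, hB, hAB⟩ := Finset.one_lt_card.mp (by omega : 1 < T.card)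
  set P := A ∩ B with hPdef
  have hPcard : P.card = 2 := h2int A hA B hB hAB
  have hVcard : (A ∪ B).card = 4 := by
    have := Finset.card_union_add_card_inter A B
    rw [huniform A hA, huniform B hB, ← hPdef] at this
    omega
  -- Any member not containing P lies in A ∪ B
  have key : ∀ X ∈ T, ¬ P ⊆ X → X ⊆ A ∪ B := by
    intro X hX hPX
    have hXA : X ≠ A := by rintro rfl; exact hPX Finset.inter_subset_left
    have hXB : X ≠ B := by rintro rfl; exact hPX Finset.inter_subset_right
    have h1 : (X ∩ A).card = 2 := h2int X hX A hA hXA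
    have h2 : (X ∩ B).card = 2 := h2int X hX B hB hXB
    have hne : X ∩ A ≠ X ∩ B := by
      intro h
      apply hPX
      have hsub : X ∩ A ⊆ P := by
        intro y hy
        have hy' : y ∈ X ∩ B := h ▸ hy
        exact Finset.mem_inter.mpr ⟨(Finset.mem_inter.mp hy).2, (Finset.mem_inter.mp hy').2⟩
      have heq : X ∩ A = P := Finset.eq_of_subset_of_card_le hsub (by omega)
      rw [← heq]; exact Finset.inter_subset_left
    have hcu := Finset.card_union_add_card_inter (X ∩ A) (X ∩ B)
    have husub : (X ∩ A) ∪ (X ∩ B) ⊆ X := by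
      apply Finset.union_subset <;> exact Finset.inter_subset_left
    have hule : ((X ∩ A) ∪ (X ∩ B)).card ≤ 3 := by
      rw [← huniform X hX]; exact Finset.card_le_card husub
    have hisub : (X ∩ A) ∩ (X ∩ B) ⊆ X ∩ A := Finset.inter_subset_left
    have hile : ((X ∩ A) ∩ (X ∩ B)).card ≤ 2 := by
      rw [← h1]; exact Finset.card_le_card hisub
    have hine : ((X ∩ A) ∩ (X ∩ B)).card ≠ 2 := by
      intro h
      have heq : (X ∩ A) ∩ (X ∩ B) = X ∩ A :=
        Finset.eq_of_subset_of_card_le hisub (by omega)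
      have : X ∩ A ⊆ X ∩ B := by rw [← heq]; exact Finset.inter_subset_right
      exact hne (Finset.eq_of_subset_of_card_le this (by omega))
    have hucard : ((X ∩ A) ∪ (X ∩ B)).card = 3 := by omega
    have hXeq : X = (X ∩ A) ∪ (X ∩ B) :=
      (Finset.eq_of_subset_of_card_le husub (by rw [huniform X hX, hucard])).symm
    rw [hXeq]
    exact Finset.union_subset
      ((Finset.inter_subset_right).trans Finset.subset_union_left)
      ((Finset.inter_subset_right).trans Finset.subset_union_right)
  -- There is a member C not containing P
  have hC : ∃ C ∈ T, ¬ P ⊆ C := by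
    by_contra h
    push_neg at h
    obtain ⟨x, hx⟩ : P.Nonempty := Finset.card_pos.mp (by omega)
    exact hnontriv ⟨x, fun X hX => h X hX hx⟩
  obtain ⟨C, hCT, hPC⟩ := hC
  have hCV : C ⊆ A ∪ B := key C hCT hPC
  refine ⟨A ∪ B, hVcard, fun X hX => ?_⟩
  by_cases hPX : P ⊆ X
  · -- X contains P; its third point lies in C
    have hXC : X ≠ C := by rintro rfl; exact hPC hPX
    have hXCcard : (X ∩ C).card = 2 := h2int X hX C hCT hXC
    have hPXsub : P ⊆ A := Finset.inter_subset_left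
    have hPCcard : (P ∩ C).card ≤ 1 := by
      by_contra h
      push_neg at h
      have hle : (P ∩ C).card ≤ 2 := by
        rw [← hPcard]; exact Finset.card_le_card Finset.inter_subset_left
      have : P ∩ C = P := Finset.eq_of_subset_of_card_le Finset.inter_subset_left (by omega)
      exact hPC (by rw [← this]; exact Finset.inter_subset_right)
    have hdiff : (X \ P).card = 1 := by
      have := Finset.card_sdiff_of_subset hPX
      rw [huniform X hX, hPcard] at this
      omega
    have hsplit : X ∩ C ⊆ (P ∩ C) ∪ (X \ P) := by
      intro y hy
      rcases Finset.mem_inter.mp hy with ⟨hyX, hyC⟩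
      by_cases hyP : y ∈ P
      · exact Finset.mem_union_left _ (Finset.mem_inter.mpr ⟨hyP, hyC⟩)
      · exact Finset.mem_union_right _ (Finset.mem_sdiff.mpr ⟨hyX, hyP⟩)
    have hdiffC : (X \ P) ⊆ C := by
      obtain ⟨x, hxeq⟩ := Finset.card_eq_one.mp hdiff
      have hxC : x ∈ C := by
        by_contra hxC
        have : X ∩ C ⊆ P ∩ C := by
          intro y hy
          have hy' := hsplit hy
          rcases Finset.mem_union.mp hy' with h' | h'
          · exact h'
          · rw [hxeq] at h'
            rcases Finset.mem_singleton.mp h' with rfl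
            exact absurd (Finset.mem_inter.mp hy).2 hxC
        have := Finset.card_le_card this
        omega
      rw [hxeq]
      exact Finset.singleton_subset_iff.mpr hxC
    have : X = P ∪ (X \ P) := by rw [Finset.union_sdiff_of_subset hPX]
    rw [this]
    exact Finset.union_subset (hPXsub.trans Finset.subset_union_left) (hdiffC.trans hCV)
  · exact key X hX hPX
end

section
/- Let n > a + b and let A ⊆ ([m] choose a), B ⊆ ([m] choose b) with m > a + b and a > b be cross-intersecting families. If |B| ≥ C(m−1, b−1) or |A| ≤ C(m−1, a−1), then |A| + |B| ≤ C(m−1, a−1) + C(m−1, b−1). -/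
/-!
Pass to complements: `ℬᶜ` consists of `(m - b)`-sets, and cross-intersection says exactly that `𝒜`
misses the `(m - a - b)`-fold shadow of `ℬᶜ`, which lives in level `a`. By Kruskal–Katona this
shadow is at least that of the colex initial segment `𝒞` with `|𝒞| = |ℬ|`. As
`|ℬ| ≥ C(m-1, b-1) = C(m-1, m-b)`, `𝒞` contains every `(m - b)`-set avoiding the largest element,
so its shadow contains all `C(m-1, a)` such `a`-sets; by local LYM inside the other `m - 1`
elements, the members of `𝒞` through the largest element add at least
`|ℬ| - C(m-1, b-1)` further sets. Hence `|𝒜| ≤ C(m, a) - C(m-1, a) - |ℬ| + C(m-1, b-1)`.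
-/

open Finset
open scoped FinsetFamily

namespace Nat

lemma choose_le_choose_of_le_of_le_half {n i j : ℕ} (hij : i ≤ j) (hj : j ≤ n / 2) :
    n.choose i ≤ n.choose j := by
  induction j, hij using Nat.le_induction with
  | base => rfl
  | succ j _ ih => exact (ih (by omega)).trans (choose_le_succ_of_lt_half_left (by omega))

lemma choose_le_choose_of_le_of_add_le {n i j : ℕ} (hij : i ≤ j) (h : i + j ≤ n) :
    n.choose i ≤ n.choose j := by
  rcases le_or_gt j (n / 2) with hj | hj
  · exact choose_le_choose_of_le_of_le_half hij hj
  · rw [← choose_symm (by omega : j ≤ n)]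
    exact choose_le_choose_of_le_of_le_half (by omega) (by omega)

end Nat

namespace Finset

variable {α β : Type*}

lemma exists_map_mapEmbedding_eq_of_subset_range {f : α ↪ β} {𝒜 : Finset (Finset β)}
    (h𝒜 : ∀ s ∈ 𝒜, ↑s ⊆ Set.range f) :
    ∃ 𝒢 : Finset (Finset α), 𝒢.map (mapEmbedding f).toEmbedding = 𝒜 := by
  classical
  have : ↑𝒜 ⊆ map f '' Set.univ := fun s hs ↦ by
    obtain ⟨t, -, rfl⟩ := subset_set_image_iff.1 (Set.image_univ ▸ h𝒜 s hs)
    exact ⟨t, trivial, map_eq_image f t⟩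
  obtain ⟨𝒢, -, h𝒢⟩ := subset_set_image_iff.1 this
  exact ⟨𝒢, by rw [map_eq_image]; exact h𝒢⟩

namespace Colex

lemma exists_isInitSeg_card_eq [LinearOrder α] [Fintype α] {r t : ℕ}
    (ht : t ≤ (Fintype.card α).choose r) : ∃ 𝒞 : Finset (Finset α), IsInitSeg 𝒞 r ∧ #𝒞 = t := by
  induction t with
  | zero => exact ⟨∅, isInitSeg_empty, rfl⟩
  | succ t ih =>
    obtain ⟨𝒞, h𝒞, rfl⟩ := ih (by omega)
    have h𝒞sub : 𝒞 ⊆ powersetCard r univ := fun s hs ↦ mem_powersetCard_univ.2 (h𝒞.1 hs)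
    have hne : (powersetCard r univ \ 𝒞).Nonempty := by
      rw [← card_pos, card_sdiff_of_subset h𝒞sub, card_powersetCard, card_univ]
      omega
    obtain ⟨s, hs, hmin⟩ := exists_min_image _ toColex hne
    rw [mem_sdiff, mem_powersetCard_univ] at hs
    refine ⟨insert s 𝒞, ⟨?_, fun u v hu ⟨hvu, hv⟩ ↦ ?_⟩, card_insert_of_notMem hs.2⟩
    · exact fun u hu ↦ (mem_insert.1 (mem_coe.1 hu)).elim (· ▸ hs.1) (h𝒞.1 ·)
    rcases mem_insert.1 hu with rfl | hu
    · by_contra hv𝒞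
      have hvfree : v ∈ powersetCard r univ \ 𝒞 :=
        mem_sdiff.2 ⟨mem_powersetCard_univ.2 hv, fun h ↦ hv𝒞 (mem_insert_of_mem h)⟩
      exact (hmin v hvfree).not_gt hvu
    · exact mem_insert_of_mem (h𝒞.2 hu ⟨hvu, hv⟩)

lemma isInitSeg_powersetCard_Iio [LinearOrder α] [LocallyFiniteOrderBot α] (a : α) (r : ℕ) :
    IsInitSeg (powersetCard r (Iio a)) r := by
  refine ⟨Set.sized_powersetCard _ _, fun s t hs ⟨hts, ht⟩ ↦ ?_⟩
  rw [mem_powersetCard] at hs ⊢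
  refine ⟨fun b hb ↦ mem_Iio.2 ?_, ht⟩
  exact forall_lt_mono hts.le (fun c hc ↦ mem_Iio.1 (hs.1 hc)) b hb

end Colex

variable [DecidableEq α] [DecidableEq β]

lemma shadow_map_mapEmbedding (f : α ↪ β) (𝒜 : Finset (Finset α)) :
    ∂ (𝒜.map (mapEmbedding f).toEmbedding) = (∂ 𝒜).map (mapEmbedding f).toEmbedding := by
  ext t
  simp only [mem_shadow_iff, mem_map, RelEmbedding.coe_toEmbedding, mapEmbedding_apply]
  constructor
  · rintro ⟨_, ⟨s, hs, rfl⟩, _, hb, rfl⟩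
    obtain ⟨a, ha, rfl⟩ := mem_map.1 hb
    exact ⟨s.erase a, ⟨s, hs, a, ha, rfl⟩, map_erase f s a⟩
  · rintro ⟨_, ⟨s, hs, a, ha, rfl⟩, rfl⟩
    exact ⟨s.map f, ⟨s, hs, rfl⟩, f a, mem_map_of_mem f ha, (map_erase f s a).symm⟩

lemma card_shadow_iterate_map_mapEmbedding (f : α ↪ β) (𝒜 : Finset (Finset α)) (k : ℕ) :
    #(∂^[k] (𝒜.map (mapEmbedding f).toEmbedding)) = #(∂^[k] 𝒜) := by
  have : Function.Semiconj (map (mapEmbedding f).toEmbedding) shadow shadow :=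
    fun 𝒜 ↦ (shadow_map_mapEmbedding f 𝒜).symm
  rw [← this.iterate_right k 𝒜, card_map]

section LYM

variable {𝕜 : Type*} [Semifield 𝕜] [LinearOrder 𝕜] [IsStrictOrderedRing 𝕜] [Fintype α]
  {𝒜 : Finset (Finset α)} {r k : ℕ}

lemma card_div_choose_le_card_shadow_iterate_div_choose (hk : k ≤ r)
    (h𝒜 : (𝒜 : Set (Finset α)).Sized r) :
    (#𝒜 : 𝕜) / (Fintype.card α).choose r ≤ #(∂^[k] 𝒜) / (Fintype.card α).choose (r - k) := by
  induction k generalizing r 𝒜 with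
  | zero => simp
  | succ k ih =>
    calc (#𝒜 : 𝕜) / (Fintype.card α).choose r
        ≤ #(∂ 𝒜) / (Fintype.card α).choose (r - 1) :=
          card_div_choose_le_card_shadow_div_choose (by omega) h𝒜
      _ ≤ #(∂^[k] (∂ 𝒜)) / (Fintype.card α).choose (r - 1 - k) := ih (by omega) h𝒜.shadow
      _ = #(∂^[k + 1] 𝒜) / (Fintype.card α).choose (r - (k + 1)) := by
          rw [Function.iterate_succ_apply, Nat.sub_sub, Nat.add_comm 1 k]

lemma card_le_card_shadow_iterate (hk : k ≤ r) (h𝒜 : (𝒜 : Set (Finset α)).Sized r)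
    (hchoose : (Fintype.card α).choose r ≤ (Fintype.card α).choose (r - k)) :
    #𝒜 ≤ #(∂^[k] 𝒜) := by
  obtain rfl | ⟨s, hs⟩ := 𝒜.eq_empty_or_nonempty
  · simp
  have hr : 0 < (Fintype.card α).choose r :=
    Nat.choose_pos (h𝒜 hs ▸ card_le_univ s)
  have hlym := card_div_choose_le_card_shadow_iterate_div_choose (𝕜 := ℚ) hk h𝒜
  have : (#𝒜 : ℚ) / (Fintype.card α).choose r ≤ #(∂^[k] 𝒜) / (Fintype.card α).choose r :=
    hlym.trans <| div_le_div_of_nonneg_left (by positivity) (by positivity)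
      (by exact_mod_cast hchoose)
  exact_mod_cast (div_le_div_iff_of_pos_right (by positivity)).1 this

end LYM

lemma card_le_card_shadow_iterate_of_forall_subset {s : Finset α} {𝒜 : Finset (Finset α)}
    {r k : ℕ} (h𝒜s : ∀ t ∈ 𝒜, t ⊆ s) (hk : k ≤ r) (h𝒜 : (𝒜 : Set (Finset α)).Sized r)
    (hchoose : (#s).choose r ≤ (#s).choose (r - k)) :
    #𝒜 ≤ #(∂^[k] 𝒜) := by
  obtain ⟨𝒢, rfl⟩ := exists_map_mapEmbedding_eq_of_subset_range
    (f := Function.Embedding.subtype (· ∈ s)) fun t ht ↦ by simpa using h𝒜s t ht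
  rw [card_map, card_shadow_iterate_map_mapEmbedding]
  refine card_le_card_shadow_iterate hk (fun t ht ↦ ?_) (by simpa using hchoose)
  simpa using h𝒜 (mem_map_of_mem _ ht)

section Subfamily

variable {𝒜 : Finset (Finset α)} {a : α} {k : ℕ}

lemma shadow_iterate_nonMemberSubfamily_subset :
    ∂^[k] (𝒜.nonMemberSubfamily a) ⊆ (∂^[k] 𝒜).nonMemberSubfamily a := by
  intro t ht
  obtain ⟨s, hs, hts, -⟩ := mem_shadow_iterate_iff_exists_sdiff.1 ht
  rw [mem_nonMemberSubfamily] at hs ⊢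
  exact ⟨shadow_monotone.iterate k (filter_subset _ _) ht, fun hat ↦ hs.2 (hts hat)⟩

lemma shadow_iterate_memberSubfamily_subset :
    ∂^[k] (𝒜.memberSubfamily a) ⊆ (∂^[k] 𝒜).memberSubfamily a := by
  intro t ht
  obtain ⟨s, hs, hts, hcard⟩ := mem_shadow_iterate_iff_exists_sdiff.1 ht
  rw [mem_memberSubfamily] at hs ⊢
  refine ⟨mem_shadow_iterate_iff_exists_sdiff.2 ⟨insert a s, hs.1, insert_subset_insert a hts, ?_⟩,
    fun hat ↦ hs.2 (hts hat)⟩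
  rwa [insert_sdiff_insert, sdiff_insert_of_notMem hs.2]

lemma card_shadow_iterate_memberSubfamily_add_card_shadow_iterate_nonMemberSubfamily_le :
    #(∂^[k] (𝒜.memberSubfamily a)) + #(∂^[k] (𝒜.nonMemberSubfamily a)) ≤ #(∂^[k] 𝒜) := by
  rw [← card_memberSubfamily_add_card_nonMemberSubfamily a (∂^[k] 𝒜)]
  exact add_le_add (card_le_card shadow_iterate_memberSubfamily_subset)
    (card_le_card shadow_iterate_nonMemberSubfamily_subset)

end Subfamily

lemma card_add_card_shadow_iterate_compls_le_choose [Fintype α] {𝒜 ℬ : Finset (Finset α)}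
    {a b : ℕ} (h𝒜 : (𝒜 : Set (Finset α)).Sized a) (hℬ : (ℬ : Set (Finset α)).Sized b)
    (hab : a + b ≤ Fintype.card α) (hcross : ∀ X ∈ 𝒜, ∀ Y ∈ ℬ, (X ∩ Y).Nonempty) :
    #𝒜 + #(∂^[Fintype.card α - a - b] ℬᶜˢ) ≤ (Fintype.card α).choose a := by
  have hdisj : Disjoint 𝒜 (∂^[Fintype.card α - a - b] ℬᶜˢ) := by
    refine disjoint_left.2 fun X hX hXℬ ↦ ?_
    obtain ⟨Z, hZ, hXZ, -⟩ := mem_shadow_iterate_iff_exists_sdiff.1 hXℬ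
    obtain ⟨x, hx⟩ := hcross X hX Zᶜ (mem_compls.1 hZ)
    exact mem_compl.1 (mem_inter.1 hx).2 (hXZ (mem_inter.1 hx).1)
  have hsized : (↑(𝒜 ∪ ∂^[Fintype.card α - a - b] ℬᶜˢ) : Set (Finset α)).Sized a := by
    rw [coe_union, Set.sized_union]
    refine ⟨h𝒜, ?_⟩
    convert hℬ.compls.shadow_iterate using 1
    omega
  rw [← card_union_of_disjoint hdisj]
  exact hsized.card_le

namespace Colex

variable {n r : ℕ} {𝒞 : Finset (Finset (Fin (n + 1)))}

lemma IsInitSeg.nonMemberSubfamily_last_eq (h𝒞 : IsInitSeg 𝒞 r) (hcard : n.choose r ≤ #𝒞) :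
    𝒞.nonMemberSubfamily (Fin.last n) = powersetCard r (Iio (Fin.last n)) := by
  have hD := isInitSeg_powersetCard_Iio (Fin.last n) r
  have hD𝒞 : powersetCard r (Iio (Fin.last n)) ⊆ 𝒞 := by
    refine (h𝒞.total hD).elim (fun h ↦ (eq_of_subset_of_card_le h ?_).ge) id
    rwa [card_powersetCard, Fin.card_Iio, Fin.val_last]
  ext s
  rw [mem_nonMemberSubfamily, mem_powersetCard]
  constructor
  · rintro ⟨hs, hlast⟩
    exact ⟨fun b hb ↦ mem_Iio.2 (Fin.lt_last_iff_ne_last.2 (ne_of_mem_of_not_mem hb hlast)),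
      h𝒞.1 hs⟩
  · exact fun hs ↦ ⟨hD𝒞 (mem_powersetCard.2 hs), fun h ↦ lt_irrefl _ (mem_Iio.1 (hs.1 h))⟩

lemma IsInitSeg.choose_add_card_le_card_shadow_iterate_add_choose {k : ℕ} (h𝒞 : IsInitSeg 𝒞 r)
    (hr : r ≤ n) (hk : k < r) (hcard : n.choose r ≤ #𝒞)
    (hchoose : n.choose (r - 1) ≤ n.choose (r - 1 - k)) :
    n.choose (r - k) + #𝒞 ≤ #(∂^[k] 𝒞) + n.choose r := by
  have hnon := h𝒞.nonMemberSubfamily_last_eq hcard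
  have hnon_card : #(𝒞.nonMemberSubfamily (Fin.last n)) = n.choose r := by
    rw [hnon, card_powersetCard, Fin.card_Iio, Fin.val_last]
  have hnon_shadow : n.choose (r - k) ≤ #(∂^[k] (𝒞.nonMemberSubfamily (Fin.last n))) :=
    kruskal_katona_lovasz_form hk.le hr n.le_succ (hnon ▸ Set.sized_powersetCard _ _)
      hnon_card.ge
  have hmem_shadow :
      #(𝒞.memberSubfamily (Fin.last n)) ≤ #(∂^[k] (𝒞.memberSubfamily (Fin.last n))) := by
    refine card_le_card_shadow_iterate_of_forall_subset (s := Iio (Fin.last n)) (r := r - 1)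
      (fun t ht ↦ ?_) (by omega) (fun t ht ↦ ?_) (by rwa [Fin.card_Iio, Fin.val_last])
    · intro b hb
      exact mem_Iio.2 (Fin.lt_last_iff_ne_last.2
        (ne_of_mem_of_not_mem hb (mem_memberSubfamily.1 ht).2))
    · obtain ⟨hins, hlast⟩ := mem_memberSubfamily.1 ht
      have := h𝒞.1 hins
      rw [card_insert_of_notMem hlast] at this
      omega
  have := card_memberSubfamily_add_card_nonMemberSubfamily (Fin.last n) 𝒞
  have := card_shadow_iterate_memberSubfamily_add_card_shadow_iterate_nonMemberSubfamily_le
    (𝒜 := 𝒞) (a := Fin.last n) (k := k)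
  omega

end Colex

end Finset

theorem card_add_card_le_of_cross_intersecting_fin {m a b : ℕ} (hm : a + b < m) (hab : b < a)
    {𝒜 ℬ : Finset (Finset (Fin m))} (h𝒜 : (𝒜 : Set (Finset (Fin m))).Sized a)
    (hℬ : (ℬ : Set (Finset (Fin m))).Sized b) (hcross : ∀ X ∈ 𝒜, ∀ Y ∈ ℬ, (X ∩ Y).Nonempty)
    (hℬcard : (m - 1).choose (b - 1) ≤ #ℬ) :
    #𝒜 + #ℬ ≤ (m - 1).choose (a - 1) + (m - 1).choose (b - 1) := by
  obtain rfl | hb := b.eq_zero_or_pos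
  -- here `(m - 1).choose (b - 1) = 1`, so `ℬ = {∅}` and `𝒜` must be empty
  · have hℬempty : ℬ ⊆ {∅} := fun Y hY ↦ mem_singleton.2 (card_eq_zero.1 (hℬ hY))
    obtain ⟨Y, hY⟩ : ℬ.Nonempty := card_pos.1 (by simpa using hℬcard)
    have h𝒜empty : 𝒜 = ∅ := eq_empty_of_forall_notMem fun X hX ↦ by
      simpa [mem_singleton.1 (hℬempty hY)] using hcross X hX Y hY
    have hℬone := card_le_card hℬempty
    rw [card_singleton] at hℬone
    rw [h𝒜empty, card_empty, Nat.zero_sub, Nat.choose_zero_right]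
    omega
  obtain ⟨n, rfl⟩ : ∃ n, m = n + 1 := ⟨m - 1, by omega⟩
  rw [Nat.add_sub_cancel] at hℬcard ⊢
  obtain ⟨𝒞, h𝒞, h𝒞card⟩ := Colex.exists_isInitSeg_card_eq (α := Fin (n + 1)) (r := n + 1 - b)
    (t := #ℬ) (by simpa [Nat.choose_symm (by omega : b ≤ n + 1)] using hℬ.card_le)
  have hdisj := card_add_card_shadow_iterate_compls_le_choose h𝒜 hℬ (by simp; omega) hcross
  rw [Fintype.card_fin] at hdisj
  have hkk : #(∂^[n + 1 - a - b] 𝒞) ≤ #(∂^[n + 1 - a - b] ℬᶜˢ) :=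
    iterated_kk (by simpa using hℬ.compls) (by rw [card_compls, h𝒞card]) h𝒞
  have hcomplB : n.choose (n + 1 - b) = n.choose (b - 1) := Nat.choose_symm_of_eq_add (by omega)
  have hinit := h𝒞.choose_add_card_le_card_shadow_iterate_add_choose (k := n + 1 - a - b)
    (by omega) (by omega) (by omega) (by
      rw [show n + 1 - b - 1 - (n + 1 - a - b) = a - 1 by omega,
        Nat.choose_symm_of_eq_add (show n = n + 1 - b - 1 + b by omega)]
      exact Nat.choose_le_choose_of_le_of_add_le (by omega) (by omega))
  have hpascal : (n + 1).choose a = n.choose (a - 1) + n.choose a := by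
    obtain ⟨a, rfl⟩ : ∃ a', a = a' + 1 := ⟨a - 1, by omega⟩
    exact Nat.choose_succ_succ' n a
  rw [show n + 1 - b - (n + 1 - a - b) = a by omega] at hinit
  omega

theorem card_add_card_le_of_cross_intersecting {β : Type*} [DecidableEq β] {s : Finset β}
    {a b : ℕ} (hs : a + b < #s) (hab : b < a) {𝒜 ℬ : Finset (Finset β)}
    (h𝒜 : ∀ X ∈ 𝒜, X ⊆ s ∧ #X = a) (hℬ : ∀ Y ∈ ℬ, Y ⊆ s ∧ #Y = b)
    (hcross : ∀ X ∈ 𝒜, ∀ Y ∈ ℬ, (X ∩ Y).Nonempty) (hℬcard : (#s - 1).choose (b - 1) ≤ #ℬ) :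
    #𝒜 + #ℬ ≤ (#s - 1).choose (a - 1) + (#s - 1).choose (b - 1) := by
  set f : Fin #s ↪ β := s.equivFin.symm.toEmbedding.trans (Function.Embedding.subtype _)
  have hf : Set.range f = s := Set.ext fun x ↦
    ⟨by rintro ⟨i, rfl⟩; simp [f], fun hx ↦ ⟨s.equivFin ⟨x, hx⟩, by simp [f]⟩⟩
  obtain ⟨𝒜, rfl⟩ := exists_map_mapEmbedding_eq_of_subset_range (f := f) fun X hX ↦
    hf ▸ coe_subset.2 (h𝒜 X hX).1
  obtain ⟨ℬ, rfl⟩ := exists_map_mapEmbedding_eq_of_subset_range (f := f) fun Y hY ↦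
    hf ▸ coe_subset.2 (hℬ Y hY).1
  simp only [card_map] at hℬcard ⊢
  refine card_add_card_le_of_cross_intersecting_fin hs hab (fun X hX ↦ ?_) (fun Y hY ↦ ?_)
    (fun X hX Y hY ↦ ?_) hℬcard
  · simpa using (h𝒜 _ (mem_map_of_mem _ hX)).2
  · simpa using (hℬ _ (mem_map_of_mem _ hY)).2
  · simpa [← map_inter] using hcross _ (mem_map_of_mem _ hX) _ (mem_map_of_mem _ hY)

/-- Hilton-type corollary: cross-intersecting `A ⊆ ([m] choose a)`, `B ⊆ ([m] choose b)`
with `m > a + b`, `a > b`. If `|B| ≥ C(m-1,b-1)` or `|A| ≤ C(m-1,a-1)` then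
`|A| + |B| ≤ C(m-1,a-1) + C(m-1,b-1)`. -/
theorem cross_intersecting_hilton_cor
    (m a b : ℕ) (hm : a + b < m) (hab : b < a)
    (A B : Finset (Finset ℕ))
    (hA : ∀ X ∈ A, X ⊆ Finset.Icc 1 m ∧ X.card = a)
    (hB : ∀ Y ∈ B, Y ⊆ Finset.Icc 1 m ∧ Y.card = b)
    (hcross : ∀ X ∈ A, ∀ Y ∈ B, (X ∩ Y).Nonempty)
    (hcond : (m - 1).choose (b - 1) ≤ B.card ∨ A.card ≤ (m - 1).choose (a - 1)) :
    A.card + B.card ≤ (m - 1).choose (a - 1) + (m - 1).choose (b - 1) := by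
  by_cases hB_card : (m - 1).choose (b - 1) ≤ B.card
  · simpa using card_add_card_le_of_cross_intersecting (s := Icc 1 m) (by simpa using hm) hab
      hA hB hcross (by simpa using hB_card)
  · have := hcond.resolve_left hB_card
    omega
end

section
/- Let F ⊆ ([n] choose k) be an intersecting family with covering number τ(F) ≥ 3, and let U ⊆ [n] satisfy |F ∩ U| ≥ 2 for all F ∈ F. Then for any 2-element subset P of U, the number of sets F ∈ F with F ∩ U = P is at most C(n−|U|, k−2) − C(n−k−|U|+2, k−2). -/
/-- If `F ⊆ ([n] choose k)` is intersecting with `τ(F) ≥ 3` and `|F ∩ U| ≥ 2` for all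
`F ∈ F`, then for any 2-subset `P ⊆ U`,
`f_P ≤ C(n-|U|, k-2) - C(n-k-|U|+2, k-2)`. -/
theorem fP_upper_bound
    (n k : ℕ) (F : Finset (Finset ℕ))
    (hFsub : ∀ A ∈ F, A ⊆ Finset.Icc 1 n ∧ A.card = k)
    (hint : ∀ A ∈ F, ∀ A' ∈ F, (A ∩ A').Nonempty)
    (hτ : ∀ S ⊆ Finset.Icc 1 n, S.card ≤ 2 → ∃ A ∈ F, S ∩ A = ∅)
    (U : Finset ℕ) (hU : U ⊆ Finset.Icc 1 n)
    (hU2 : ∀ A ∈ F, 2 ≤ (A ∩ U).card)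
    (P : Finset ℕ) (hP : P ⊆ U) (hPcard : P.card = 2) :
    (F.filter (fun A => A ∩ U = P)).card ≤
      (n - U.card).choose (k - 2) - (n + 2 - k - U.card).choose (k - 2) := by
  classical
  set I := Finset.Icc 1 n with hI
  have hIcard : I.card = n := by simp [hI]
  obtain ⟨A0, hA0F, hA0P⟩ := hτ P (hP.trans hU) (by rw [hPcard])
  obtain ⟨hA0sub, hA0card⟩ := hFsub A0 hA0F
  have hk2 : 2 ≤ k := by
    have h1 := hU2 A0 hA0F
    have h2 : (A0 ∩ U).card ≤ A0.card := Finset.card_le_card Finset.inter_subset_left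
    omega
  set G := F.filter (fun A => A ∩ U = P) with hG
  have hinj : Set.InjOn (fun A => A \ U) ↑G := by
    intro A hA B hB h
    simp only [hG, Finset.coe_filter, Set.mem_setOf_eq] at hA hB
    have hA' : A = (A \ U) ∪ P := by
      rw [← hA.2]; exact (Finset.sdiff_union_inter A U).symm
    have hB' : B = (B \ U) ∪ P := by
      rw [← hB.2]; exact (Finset.sdiff_union_inter B U).symm
    rw [hA', hB']
    simp only at h
    rw [h]
  have hsub : G.image (fun A => A \ U) ⊆
      (Finset.powersetCard (k-2) (I \ U)) \ (Finset.powersetCard (k-2) ((I \ U) \ A0)) := by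
    intro s hs
    obtain ⟨A, hA, rfl⟩ := Finset.mem_image.mp hs
    rw [hG, Finset.mem_filter] at hA
    obtain ⟨hAF, hAU⟩ := hA
    obtain ⟨hAsub, hAcard⟩ := hFsub A hAF
    have hcard : (A \ U).card = k - 2 := by
      have := Finset.card_sdiff_add_card_inter A U
      rw [hAU, hPcard] at this
      omega
    rw [Finset.mem_sdiff]
    constructor
    · rw [Finset.mem_powersetCard]
      exact ⟨fun x hx => Finset.mem_sdiff.mpr
        ⟨hAsub (Finset.mem_sdiff.mp hx).1, (Finset.mem_sdiff.mp hx).2⟩, hcard⟩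
    · rw [Finset.mem_powersetCard]
      rintro ⟨hsub', -⟩
      obtain ⟨x, hx⟩ := hint A hAF A0 hA0F
      rw [Finset.mem_inter] at hx
      have hxU : x ∉ U := by
        intro hxU
        have hxP : x ∈ P := hAU ▸ Finset.mem_inter.mpr ⟨hx.1, hxU⟩
        have : x ∈ P ∩ A0 := Finset.mem_inter.mpr ⟨hxP, hx.2⟩
        rw [hA0P] at this; exact absurd this (Finset.notMem_empty x)
      have := hsub' (Finset.mem_sdiff.mpr ⟨hx.1, hxU⟩)
      exact (Finset.mem_sdiff.mp this).2 hx.2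
  have hTS : (Finset.powersetCard (k-2) ((I \ U) \ A0)) ⊆
      Finset.powersetCard (k-2) (I \ U) :=
    Finset.powersetCard_mono Finset.sdiff_subset
  have hGcard : G.card ≤ (Finset.powersetCard (k-2) (I \ U)).card
      - (Finset.powersetCard (k-2) ((I \ U) \ A0)).card := by
    calc G.card = (G.image (fun A => A \ U)).card := (Finset.card_image_of_injOn hinj).symm
    _ ≤ _ := by rw [← Finset.card_sdiff_of_subset hTS]; exact Finset.card_le_card hsub
  rw [Finset.card_powersetCard, Finset.card_powersetCard] at hGcard
  have hcard1 : (I \ U).card = n - U.card := by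
    rw [Finset.card_sdiff_of_subset hU, hIcard]
  have hcard2 : n + 2 - k - U.card ≤ ((I \ U) \ A0).card := by
    have h1 : ((I \ U) \ A0) = (I \ (U ∪ A0)) := by rw [sdiff_sdiff]; rfl
    have h2 : (U ∪ A0) ⊆ I := Finset.union_subset hU hA0sub
    have h3 : (A0 \ U).card + U.card = (A0 ∪ U).card := Finset.card_sdiff_add_card A0 U
    have h4 : (A0 \ U).card + (A0 ∩ U).card = A0.card := Finset.card_sdiff_add_card_inter A0 U
    have h5 := hU2 A0 hA0F
    rw [h1, Finset.card_sdiff_of_subset h2, hIcard, Finset.union_comm U A0, ← h3]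
    omega
  have hmono := Nat.choose_le_choose (k-2) hcard2
  rw [hcard1] at hGcard
  omega
end

section
/- Let F ⊆ ([n] choose k) be intersecting with τ(F) ≥ 3 and let U ⊆ [n] satisfy |F ∩ U| ≥ 2 for all F ∈ F. Then for any disjoint 2-element subsets P, P' of U and n ≥ 2k + |U| − 4, f_P + f_{P'} ≤ C(n−|U|, k−2) − C(n−k−|U|+2, k−2) + 1, where f_S counts the members F ∈ F with F ∩ U = S. -/
/-!
Deleting `U` from the members of `F` with trace `P`, resp. `P'`, leaves two `(k - 2)`-uniform
families on `[n] \ U`, and they are cross-intersecting because `F` is intersecting and `P, P'` are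
disjoint. If both are nonempty, the bound is the Frankl–Tokushige inequality. We prove it by
induction on the ground set. Shifting towards a point `t` preserves cross-intersection and the
sizes of the families. Once the families are stable under these shifts, their links at `t` are
again cross-intersecting, so each slice at `t` is bounded by induction, or by counting the sets
that miss a fixed member of the other family. If one family is empty, `τ(F) ≥ 3` gives a member
`A₀` disjoint from its pair, and every set in the other family meets the at most `k - 2` points
of `A₀ \ U`.
-/

open Finset FinsetFamily

variable {α : Type*} [DecidableEq α]

def CrossIntersecting (𝒜 ℬ : Finset (Finset α)) : Prop :=
  ∀ A ∈ 𝒜, ∀ B ∈ ℬ, (A ∩ B).Nonempty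

namespace CrossIntersecting

variable {𝒜 ℬ 𝒜' ℬ' : Finset (Finset α)}

lemma symm (h : CrossIntersecting 𝒜 ℬ) : CrossIntersecting ℬ 𝒜 :=
  fun B hB A hA => inter_comm A B ▸ h A hA B hB

lemma mono (h : CrossIntersecting 𝒜 ℬ) (h𝒜 : 𝒜' ⊆ 𝒜) (hℬ : ℬ' ⊆ ℬ) :
    CrossIntersecting 𝒜' ℬ' :=
  fun A hA B hB => h A (h𝒜 hA) B (hℬ hB)

lemma pos_of_subset_powersetCard {V : Finset α} {k : ℕ} (h : CrossIntersecting 𝒜 ℬ)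
    (h𝒜 : 𝒜 ⊆ powersetCard k V) (h𝒜ne : 𝒜.Nonempty) (hℬne : ℬ.Nonempty) : 0 < k := by
  obtain ⟨A, hA⟩ := h𝒜ne
  obtain ⟨B, hB⟩ := hℬne
  rw [← (mem_powersetCard.1 (h𝒜 hA)).2]
  exact (h A hA B hB).mono inter_subset_left |>.card_pos

end CrossIntersecting

theorem card_add_choose_le_of_forall_inter_nonempty {W T : Finset α} {𝒳 : Finset (Finset α)}
    {s : ℕ} (hT : T ⊆ W) (h𝒳 : 𝒳 ⊆ powersetCard s W) (hmeet : ∀ X ∈ 𝒳, (X ∩ T).Nonempty) :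
    #𝒳 + (#W - #T).choose s ≤ (#W).choose s := by
  have hdisj : Disjoint 𝒳 (powersetCard s (W \ T)) := by
    refine disjoint_left.2 fun X hX hX' => ?_
    obtain ⟨x, hx⟩ := hmeet X hX
    exact (mem_sdiff.1 ((mem_powersetCard.1 hX').1 (mem_inter.1 hx).1)).2 (mem_inter.1 hx).2
  have hsub : 𝒳 ∪ powersetCard s (W \ T) ⊆ powersetCard s W :=
    union_subset h𝒳 (powersetCard_mono sdiff_subset)
  simpa [card_union_of_disjoint hdisj, card_sdiff_of_subset hT] using card_le_card hsub

theorem CrossIntersecting.card_add_choose_le {W : Finset α} {𝒳 𝒴 : Finset (Finset α)}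
    {r s : ℕ} (h : CrossIntersecting 𝒳 𝒴) (h𝒳 : 𝒳 ⊆ powersetCard s W)
    (h𝒴 : 𝒴 ⊆ powersetCard r W) (h𝒴ne : 𝒴.Nonempty) :
    #𝒳 + (#W - r).choose s ≤ (#W).choose s := by
  obtain ⟨Y, hY⟩ := h𝒴ne
  obtain ⟨hYW, rfl⟩ := mem_powersetCard.1 (h𝒴 hY)
  exact card_add_choose_le_of_forall_inter_nonempty hYW h𝒳 fun X hX => h X hX Y hY

theorem card_add_card_le_choose_of_card_eq_two_mul {V : Finset α} {𝒜 ℬ : Finset (Finset α)}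
    {r : ℕ} (hV : #V = 2 * r) (h𝒜 : 𝒜 ⊆ powersetCard r V) (hℬ : ℬ ⊆ powersetCard r V)
    (h : CrossIntersecting 𝒜 ℬ) : #𝒜 + #ℬ ≤ (#V).choose r := by
  have hinj : Set.InjOn (V \ ·) ℬ := fun B hB B' hB' hBB' => by
    rw [← Finset.sdiff_sdiff_eq_self (mem_powersetCard.1 (hℬ hB)).1,
      ← Finset.sdiff_sdiff_eq_self (mem_powersetCard.1 (hℬ hB')).1]
    exact congrArg (V \ ·) hBB'
  have hdisj : Disjoint 𝒜 (ℬ.image (V \ ·)) := by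
    refine disjoint_left.2 fun A hA hA' => ?_
    obtain ⟨B, hB, rfl⟩ := mem_image.1 hA'
    obtain ⟨x, hx⟩ := h _ hA B hB
    simp at hx
  have hsub : 𝒜 ∪ ℬ.image (V \ ·) ⊆ powersetCard r V := by
    refine union_subset h𝒜 fun C hC => ?_
    obtain ⟨B, hB, rfl⟩ := mem_image.1 hC
    obtain ⟨hBV, hBr⟩ := mem_powersetCard.1 (hℬ hB)
    exact mem_powersetCard.2 ⟨sdiff_subset, by rw [card_sdiff_of_subset hBV, hV, hBr]; omega⟩
  simpa [card_union_of_disjoint hdisj, card_image_of_injOn hinj] using card_le_card hsub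

namespace UV

variable {i t : α} {A : Finset α} {𝒜 ℬ : Finset (Finset α)}

theorem compress_singleton (i t : α) (A : Finset α) :
    compress {i} {t} A = if i ∉ A ∧ t ∈ A then insert i (A.erase t) else A := by
  simp only [compress, disjoint_singleton_left, singleton_subset_iff]
  split_ifs with h
  · ext x
    have : i ≠ t := fun hit => h.1 (hit ▸ h.2)
    simp only [mem_sdiff, sup_eq_union, mem_union, mem_singleton, mem_insert, mem_erase]
    grind
  · rfl

theorem compression_singleton_subset_powersetCard {V : Finset α} {k : ℕ} (hi : i ∈ V)
    (h𝒜 : 𝒜 ⊆ powersetCard k V) : 𝓒 {i} {t} 𝒜 ⊆ powersetCard k V := by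
  intro C hC
  obtain ⟨hC, -⟩ | ⟨-, A, hA, rfl⟩ := mem_compression.1 hC
  · exact h𝒜 hC
  obtain ⟨hAV, hAk⟩ := mem_powersetCard.1 (h𝒜 hA)
  refine mem_powersetCard.2 ⟨?_, by rw [card_compress (by simp), hAk]⟩
  rw [compress_singleton]
  split_ifs
  · exact insert_subset hi ((erase_subset t A).trans hAV)
  · exact hAV

theorem inter_nonempty_compress_singleton (h : CrossIntersecting 𝒜 ℬ) {B : Finset α}
    (hA : A ∈ 𝒜) (hB : B ∈ ℬ) (hB' : compress {i} {t} B ∈ ℬ) :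
    (compress {i} {t} A ∩ B).Nonempty := by
  rw [compress_singleton]
  split_ifs with hA'
  swap
  · exact h A hA B hB
  by_cases hiB : i ∈ B
  · exact ⟨i, by simp [hiB]⟩
  by_cases htB : t ∈ B
  · rw [compress_singleton, if_pos ⟨hiB, htB⟩] at hB'
    obtain ⟨x, hx⟩ := h A hA _ hB'
    refine ⟨x, ?_⟩
    simp only [mem_inter, mem_insert, mem_erase] at hx ⊢
    grind
  · obtain ⟨x, hx⟩ := h A hA B hB
    refine ⟨x, ?_⟩
    simp only [mem_inter, mem_insert, mem_erase] at hx ⊢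
    grind

theorem _root_.CrossIntersecting.compression (h : CrossIntersecting 𝒜 ℬ) :
    CrossIntersecting (𝓒 {i} {t} 𝒜) (𝓒 {i} {t} ℬ) := by
  intro A' hA' B' hB'
  rcases mem_compression.1 hA' with ⟨hA, hA'⟩ | ⟨hA'𝒜, A, hA, rfl⟩ <;>
    rcases mem_compression.1 hB' with ⟨hB, hB'⟩ | ⟨hB'ℬ, B, hB, rfl⟩
  · exact h _ hA _ hB
  · rw [inter_comm]
    exact inter_nonempty_compress_singleton h.symm hB hA hA'
  · exact inter_nonempty_compress_singleton h hA hB hB'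
  · exact ⟨i, mem_inter.2 ⟨singleton_subset_iff.1 (le_of_mem_compression_of_notMem hA' hA'𝒜),
      singleton_subset_iff.1 (le_of_mem_compression_of_notMem hB' hB'ℬ)⟩⟩

theorem card_filter_mem_compression_singleton_lt (hA : A ∈ 𝒜) (hA' : compress {i} {t} A ∉ 𝒜) :
    #{C ∈ 𝓒 {i} {t} 𝒜 | t ∈ C} < #{C ∈ 𝒜 | t ∈ C} := by
  refine card_lt_card ⟨fun C hC => ?_, fun hsub => ?_⟩
  · obtain ⟨hC, htC⟩ := mem_filter.1 hC
    refine mem_filter.2 ⟨?_, htC⟩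
    by_contra hC𝒜
    exact disjoint_singleton_left.1 (disjoint_of_mem_compression_of_notMem hC hC𝒜) htC
  · have htA : t ∈ A := by
      by_contra htA
      rw [compress_singleton, if_neg (by tauto)] at hA'
      exact hA' hA
    obtain ⟨hA𝒜, -⟩ := mem_filter.1 (hsub (mem_filter.2 ⟨hA, htA⟩))
    rcases mem_compression.1 hA𝒜 with ⟨-, h⟩ | ⟨h, -⟩
    · exact hA' h
    · exact h hA

end UV

section Subfamily

variable {V : Finset α} {𝒜 ℬ : Finset (Finset α)} {t : α} {k : ℕ}

theorem nonMemberSubfamily_subset_powersetCard (h𝒜 : 𝒜 ⊆ powersetCard k V) :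
    𝒜.nonMemberSubfamily t ⊆ powersetCard k (V.erase t) := by
  intro A hA
  obtain ⟨hA, htA⟩ := mem_nonMemberSubfamily.1 hA
  obtain ⟨hAV, hAk⟩ := mem_powersetCard.1 (h𝒜 hA)
  exact mem_powersetCard.2 ⟨subset_erase.2 ⟨hAV, htA⟩, hAk⟩

theorem memberSubfamily_subset_powersetCard (h𝒜 : 𝒜 ⊆ powersetCard (k + 1) V) :
    𝒜.memberSubfamily t ⊆ powersetCard k (V.erase t) := by
  intro A hA
  obtain ⟨hA, htA⟩ := mem_memberSubfamily.1 hA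
  obtain ⟨hAV, hAk⟩ := mem_powersetCard.1 (h𝒜 hA)
  rw [card_insert_of_notMem htA, Nat.add_right_cancel_iff] at hAk
  exact mem_powersetCard.2 ⟨subset_erase.2 ⟨(subset_insert t A).trans hAV, htA⟩, hAk⟩

theorem CrossIntersecting.memberSubfamily_nonMemberSubfamily (h : CrossIntersecting 𝒜 ℬ) :
    CrossIntersecting (𝒜.memberSubfamily t) (ℬ.nonMemberSubfamily t) := by
  intro A hA B hB
  obtain ⟨hA, -⟩ := mem_memberSubfamily.1 hA
  obtain ⟨hB, htB⟩ := mem_nonMemberSubfamily.1 hB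
  obtain ⟨x, hx⟩ := h _ hA B hB
  refine ⟨x, ?_⟩
  simp only [mem_inter, mem_insert] at hx ⊢
  grind

/-- Since `2 * k ≤ #V`, two members through `t` leave a point `i ∈ V` outside both; shifting
`t` to `i` in the `𝒜`-side member gives a member of `𝒜`, which must meet the other one outside
`{i, t}`. -/
theorem CrossIntersecting.memberSubfamily (h : CrossIntersecting 𝒜 ℬ)
    (h𝒜 : 𝒜 ⊆ powersetCard k V) (hℬ : ℬ ⊆ powersetCard k V) (hV : 2 * k ≤ #V)
    (hstable : ∀ i ∈ V, ∀ A ∈ 𝒜, UV.compress {i} {t} A ∈ 𝒜) :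
    CrossIntersecting (𝒜.memberSubfamily t) (ℬ.memberSubfamily t) := by
  intro A hA B hB
  obtain ⟨hA, htA⟩ := mem_memberSubfamily.1 hA
  obtain ⟨hB, htB⟩ := mem_memberSubfamily.1 hB
  obtain ⟨hAV, hAk⟩ := mem_powersetCard.1 (h𝒜 hA)
  obtain ⟨hBV, hBk⟩ := mem_powersetCard.1 (hℬ hB)
  have hcard : #(insert t (A ∪ B)) < #V := by
    have := card_union_le A B
    rw [card_insert_of_notMem htA] at hAk
    rw [card_insert_of_notMem htB] at hBk
    grind [card_insert_le]
  obtain ⟨i, hiV, hi⟩ := exists_mem_notMem_of_card_lt_card hcard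
  have hshift := hstable i hiV _ hA
  rw [UV.compress_singleton, if_pos (by grind), erase_insert htA] at hshift
  obtain ⟨x, hx⟩ := h _ hshift _ hB
  refine ⟨x, ?_⟩
  simp only [mem_inter, mem_insert, mem_union] at hx hi ⊢
  grind

end Subfamily

theorem CrossIntersecting.exists_stable {V : Finset α} {𝒜 ℬ : Finset (Finset α)} {k : ℕ}
    (h : CrossIntersecting 𝒜 ℬ) (h𝒜 : 𝒜 ⊆ powersetCard k V) (hℬ : ℬ ⊆ powersetCard k V)
    (t : α) :
    ∃ 𝒜' ℬ' : Finset (Finset α), 𝒜' ⊆ powersetCard k V ∧ ℬ' ⊆ powersetCard k V ∧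
      #𝒜' = #𝒜 ∧ #ℬ' = #ℬ ∧ CrossIntersecting 𝒜' ℬ' ∧
      ∀ i ∈ V, ∀ A ∈ 𝒜', UV.compress {i} {t} A ∈ 𝒜' := by
  induction hm : #{A ∈ 𝒜 | t ∈ A} using Nat.strong_induction_on generalizing 𝒜 ℬ with
  | _ m ih =>
  by_cases hstable : ∀ i ∈ V, ∀ A ∈ 𝒜, UV.compress {i} {t} A ∈ 𝒜
  · exact ⟨𝒜, ℬ, h𝒜, hℬ, rfl, rfl, h, hstable⟩
  push Not at hstable
  obtain ⟨i, hi, A, hA, hA'⟩ := hstable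
  obtain ⟨𝒜', ℬ', h𝒜', hℬ', hcard𝒜, hcardℬ, h', hstable'⟩ :=
    ih _ (hm ▸ UV.card_filter_mem_compression_singleton_lt hA hA') h.compression
      (UV.compression_singleton_subset_powersetCard hi h𝒜)
      (UV.compression_singleton_subset_powersetCard hi hℬ) rfl
  exact ⟨𝒜', ℬ', h𝒜', hℬ', hcard𝒜.trans (UV.card_compression _ _ _),
    hcardℬ.trans (UV.card_compression _ _ _), h', hstable'⟩

theorem Nat.choose_add_one_le_choose_succ {n r : ℕ} (hr : 0 < r) (hrn : r ≤ n + 1) :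
    n.choose r + 1 ≤ (n + 1).choose r := by
  obtain ⟨r, rfl⟩ := Nat.exists_eq_add_one_of_ne_zero hr.ne'
  have := Nat.choose_pos (by omega : r ≤ n)
  rw [Nat.choose_succ_succ']
  omega

def FranklTokushige (V : Finset α) : Prop :=
  ∀ (r : ℕ) (𝒜 ℬ : Finset (Finset α)), 𝒜 ⊆ powersetCard r V → ℬ ⊆ powersetCard r V →
    2 * r ≤ #V → CrossIntersecting 𝒜 ℬ → 𝒜.Nonempty → ℬ.Nonempty →
    #𝒜 + #ℬ + (#V - r).choose r ≤ (#V).choose r + 1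

theorem FranklTokushige.card_add_card_add_choose_le_of_stable {V : Finset α} {t : α}
    (ht : t ∈ V) (IH : FranklTokushige (V.erase t)) {s : ℕ} {𝒜 ℬ : Finset (Finset α)}
    (h𝒜 : 𝒜 ⊆ powersetCard (s + 1) V) (hℬ : ℬ ⊆ powersetCard (s + 1) V)
    (hV : 2 * (s + 1) < #V) (h : CrossIntersecting 𝒜 ℬ) (h𝒜ne : 𝒜.Nonempty)
    (hℬne : ℬ.Nonempty) (hstable : ∀ i ∈ V, ∀ A ∈ 𝒜, UV.compress {i} {t} A ∈ 𝒜) :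
    #𝒜 + #ℬ + (#V - (s + 1)).choose (s + 1) ≤ (#V).choose (s + 1) + 1 := by
  set W := V.erase t
  have hVW : #V = #W + 1 := (card_erase_add_one ht).symm
  set 𝒜₀ := 𝒜.nonMemberSubfamily t
  set 𝒜₁ := 𝒜.memberSubfamily t
  set ℬ₀ := ℬ.nonMemberSubfamily t
  set ℬ₁ := ℬ.memberSubfamily t
  have h𝒜₀ : 𝒜₀ ⊆ powersetCard (s + 1) W := nonMemberSubfamily_subset_powersetCard h𝒜
  have h𝒜₁ : 𝒜₁ ⊆ powersetCard s W := memberSubfamily_subset_powersetCard h𝒜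
  have hℬ₀ : ℬ₀ ⊆ powersetCard (s + 1) W := nonMemberSubfamily_subset_powersetCard hℬ
  have hℬ₁ : ℬ₁ ⊆ powersetCard s W := memberSubfamily_subset_powersetCard hℬ
  have h₀₀ : CrossIntersecting 𝒜₀ ℬ₀ := h.mono (filter_subset _ _) (filter_subset _ _)
  have h₁₁ : CrossIntersecting 𝒜₁ ℬ₁ := h.memberSubfamily h𝒜 hℬ hV.le hstable
  have h₁₀ : CrossIntersecting 𝒜₁ ℬ₀ := h.memberSubfamily_nonMemberSubfamily
  have h₀₁ : CrossIntersecting ℬ₁ 𝒜₀ := h.symm.memberSubfamily_nonMemberSubfamily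
  have ih₀ : 0 < #𝒜₀ → 0 < #ℬ₀ →
      #𝒜₀ + #ℬ₀ + (#W - (s + 1)).choose (s + 1) ≤ (#W).choose (s + 1) + 1 := fun ha hb =>
    IH _ _ _ h𝒜₀ hℬ₀ (by omega) h₀₀ (card_pos.1 ha) (card_pos.1 hb)
  have ih₁ : 0 < #𝒜₁ → 0 < #ℬ₁ →
      0 < s ∧ #𝒜₁ + #ℬ₁ + (#W - s).choose s ≤ (#W).choose s + 1 := fun ha hb =>
    ⟨h₁₁.pos_of_subset_powersetCard h𝒜₁ (card_pos.1 ha) (card_pos.1 hb),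
      IH _ _ _ h𝒜₁ hℬ₁ (by omega) h₁₁ (card_pos.1 ha) (card_pos.1 hb)⟩
  have a₁ : 0 < #ℬ₀ → #𝒜₁ + (#W - (s + 1)).choose s ≤ (#W).choose s := fun hb =>
    h₁₀.card_add_choose_le h𝒜₁ hℬ₀ (card_pos.1 hb)
  have b₁ : 0 < #𝒜₀ → #ℬ₁ + (#W - (s + 1)).choose s ≤ (#W).choose s := fun ha =>
    h₀₁.card_add_choose_le hℬ₁ h𝒜₀ (card_pos.1 ha)
  have a₀ : 0 < #ℬ₁ → #𝒜₀ + (#W - s).choose (s + 1) ≤ (#W).choose (s + 1) := fun hb =>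
    h₀₁.symm.card_add_choose_le h𝒜₀ hℬ₁ (card_pos.1 hb)
  have b₀ : 0 < #𝒜₁ → #ℬ₀ + (#W - s).choose (s + 1) ≤ (#W).choose (s + 1) := fun ha =>
    h₁₀.symm.card_add_choose_le hℬ₀ h𝒜₁ (card_pos.1 ha)
  have hW : #W - s = #W - (s + 1) + 1 := by omega
  have pascal₁ := Nat.choose_succ_succ' (#W) s
  have pascal₂ : (#W - s).choose (s + 1) =
      (#W - (s + 1)).choose s + (#W - (s + 1)).choose (s + 1) := by
    rw [hW, Nat.choose_succ_succ']
  have pascal₃ : 0 < s → (#W - (s + 1)).choose s + 1 ≤ (#W - s).choose s := fun hs =>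
    hW ▸ Nat.choose_add_one_le_choose_succ hs (by omega)
  have hpos : 0 < (#W - (s + 1)).choose s := Nat.choose_pos (by omega)
  have h𝒜card : #𝒜₁ + #𝒜₀ = #𝒜 := card_memberSubfamily_add_card_nonMemberSubfamily t 𝒜
  have hℬcard : #ℬ₁ + #ℬ₀ = #ℬ := card_memberSubfamily_add_card_nonMemberSubfamily t ℬ
  have h𝒜pos := card_pos.2 h𝒜ne
  have hℬpos := card_pos.2 hℬne
  rw [hVW, Nat.add_sub_add_right]
  omega

theorem frankl_tokushige (V : Finset α) : FranklTokushige V := by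
  induction V using Finset.strongInduction with
  | H V ih =>
  intro r 𝒜 ℬ h𝒜 hℬ hV h h𝒜ne hℬne
  obtain ⟨s, rfl⟩ := Nat.exists_eq_add_one_of_ne_zero
    (h.pos_of_subset_powersetCard h𝒜 h𝒜ne hℬne).ne'
  rcases hV.eq_or_lt with hV | hV
  · have := card_add_card_le_choose_of_card_eq_two_mul hV.symm h𝒜 hℬ h
    rw [show #V - (s + 1) = s + 1 by omega, Nat.choose_self]
    omega
  · obtain ⟨t, ht⟩ := card_pos.1 (by omega : 0 < #V)
    obtain ⟨𝒜', ℬ', h𝒜', hℬ', hcard𝒜, hcardℬ, h', hstable⟩ := h.exists_stable h𝒜 hℬ t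
    rw [← hcard𝒜, ← hcardℬ]
    exact (ih _ (erase_ssubset ht)).card_add_card_add_choose_le_of_stable ht h𝒜' hℬ' hV h'
      (card_pos.1 (hcard𝒜 ▸ card_pos.2 h𝒜ne)) (card_pos.1 (hcardℬ ▸ card_pos.2 hℬne)) hstable

section Link

variable {W U P P' : Finset α} {F : Finset (Finset α)} {k : ℕ}

/-- `link F U P = {A \ U | A ∈ F, A ∩ U = P}`; its size is the paper's `f_P`. -/
def link (F : Finset (Finset α)) (U P : Finset α) : Finset (Finset α) :=
  {A ∈ F | A ∩ U = P}.image (· \ U)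

theorem card_link : #(link F U P) = #{A ∈ F | A ∩ U = P} := by
  refine card_image_of_injOn fun A hA B hB hAB => ?_
  have hA := (mem_filter.1 hA).2
  have hB := (mem_filter.1 hB).2
  rw [← sdiff_union_inter A U, ← sdiff_union_inter B U, hA, hB]
  exact congrArg (· ∪ P) hAB

theorem link_subset_powersetCard (hF : F ⊆ powersetCard k W) :
    link F U P ⊆ powersetCard (k - #P) (W \ U) := by
  intro C hC
  obtain ⟨A, hA, rfl⟩ := mem_image.1 hC
  obtain ⟨hAF, rfl⟩ := mem_filter.1 hA
  obtain ⟨hAW, rfl⟩ := mem_powersetCard.1 (hF hAF)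
  exact mem_powersetCard.2 ⟨sdiff_subset_sdiff hAW subset_rfl, by
    rw [← card_sdiff_add_card_inter A U, Nat.add_sub_cancel]⟩

theorem CrossIntersecting.link (h : CrossIntersecting F F) (hPP' : Disjoint P P') :
    CrossIntersecting (link F U P) (link F U P') := by
  intro C hC D hD
  obtain ⟨A, hA, rfl⟩ := mem_image.1 hC
  obtain ⟨B, hB, rfl⟩ := mem_image.1 hD
  obtain ⟨hAF, rfl⟩ := mem_filter.1 hA
  obtain ⟨hBF, rfl⟩ := mem_filter.1 hB
  obtain ⟨x, hx⟩ := h A hAF B hBF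
  refine ⟨x, ?_⟩
  rw [mem_inter] at hx
  have hxU : x ∉ U := fun hxU =>
    disjoint_left.1 hPP' (mem_inter.2 ⟨hx.1, hxU⟩) (mem_inter.2 ⟨hx.2, hxU⟩)
  exact mem_inter.2 ⟨mem_sdiff.2 ⟨hx.1, hxU⟩, mem_sdiff.2 ⟨hx.2, hxU⟩⟩

theorem card_link_add_choose_le (hF : F ⊆ powersetCard k W) (h : CrossIntersecting F F)
    {A₀ : Finset α} (hA₀ : A₀ ∈ F) (hPA₀ : Disjoint P A₀) (hA₀U : #P ≤ #(A₀ ∩ U)) :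
    #(link F U P) + (#(W \ U) - (k - #P)).choose (k - #P) ≤ (#(W \ U)).choose (k - #P) := by
  have hA₀link : A₀ \ U ∈ link F U (A₀ ∩ U) := mem_image_of_mem _ (mem_filter.2 ⟨hA₀, rfl⟩)
  have := (h.link (hPA₀.mono_right inter_subset_left)).card_add_choose_le
    (link_subset_powersetCard hF) (link_subset_powersetCard hF) ⟨_, hA₀link⟩
  exact le_trans (by gcongr) this

end Link

/-- If `F ⊆ ([n] choose k)` is intersecting with `τ(F) ≥ 3`, `|F ∩ U| ≥ 2` for all
`F ∈ F`, and `n ≥ 2k + |U| - 4`, then for disjoint 2-subsets `P, P' ⊆ U`,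
`f_P + f_{P'} ≤ C(n-|U|, k-2) - C(n-k-|U|+2, k-2) + 1`. -/
theorem fP_plus_fP'_upper_bound
    (n k : ℕ) (F : Finset (Finset ℕ))
    (hFsub : ∀ A ∈ F, A ⊆ Finset.Icc 1 n ∧ A.card = k)
    (hint : ∀ A ∈ F, ∀ A' ∈ F, (A ∩ A').Nonempty)
    (hτ : ∀ S ⊆ Finset.Icc 1 n, S.card ≤ 2 → ∃ A ∈ F, S ∩ A = ∅)
    (U : Finset ℕ) (hU : U ⊆ Finset.Icc 1 n)
    (hU2 : ∀ A ∈ F, 2 ≤ (A ∩ U).card)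
    (hn : 2 * k + U.card ≤ n + 4)
    (P P' : Finset ℕ) (hP : P ⊆ U) (hP' : P' ⊆ U)
    (hPcard : P.card = 2) (hP'card : P'.card = 2) (hdisj : P ∩ P' = ∅) :
    (F.filter (fun A => A ∩ U = P)).card + (F.filter (fun A => A ∩ U = P')).card ≤
      (n - U.card).choose (k - 2) - (n + 2 - k - U.card).choose (k - 2) + 1 := by
  have hF : F ⊆ powersetCard k (Icc 1 n) := fun A hA => mem_powersetCard.2 (hFsub A hA)
  obtain ⟨A, hA, -⟩ := hτ ∅ (empty_subset _) (by simp)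
  obtain ⟨s, rfl⟩ := Nat.exists_eq_add_of_le'
    ((hU2 A hA).trans ((card_le_card inter_subset_left).trans (hFsub A hA).2.le))
  set X := Icc 1 n \ U
  have hX : #X = n - #U := by rw [card_sdiff_of_subset hU, Nat.card_Icc, Nat.add_sub_cancel]
  have hlink : ∀ Q : Finset ℕ, #Q = 2 → link F U Q ⊆ powersetCard s X := fun Q hQ => by
    simpa [hQ] using link_subset_powersetCard (U := U) (P := Q) hF
  have hsingle : ∀ Q ⊆ U, #Q = 2 → #(link F U Q) + (#X - s).choose s ≤ (#X).choose s := by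
    intro Q hQ hQ2
    obtain ⟨A₀, hA₀, hQA₀⟩ := hτ Q (hQ.trans hU) hQ2.le
    simpa [hQ2] using card_link_add_choose_le hF hint hA₀
      (disjoint_iff_inter_eq_empty.2 hQA₀) (hQ2 ▸ hU2 A₀ hA₀)
  have hbound : #(link F U P) + #(link F U P') + (#X - s).choose s ≤ (#X).choose s + 1 := by
    rcases (link F U P).eq_empty_or_nonempty with h | h
    · have := hsingle P' hP' hP'card
      rw [h, card_empty]
      omega
    rcases (link F U P').eq_empty_or_nonempty with h' | h'
    · have := hsingle P hP hPcard
      rw [h', card_empty]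
      omega
    exact frankl_tokushige X s _ _ (hlink P hPcard) (hlink P' hP'card) (by omega)
      (CrossIntersecting.link hint (disjoint_iff_inter_eq_empty.2 hdisj)) h h'
  have hmono : (#X - s).choose s ≤ (#X).choose s := Nat.choose_le_choose _ (Nat.sub_le _ _)
  rw [← card_link, ← card_link, Nat.add_sub_cancel, show n + 2 - (s + 2) - #U = #X - s by omega,
    ← hX]
  omega
end

section
/- Let F ⊆ ([n] choose 4) be an intersecting family with τ(F) ≥ 3 and n ≥ 9, such that |F ∩ [5]| ≥ 2 for all F ∈ F. Then for any disjoint 2-element subsets P, P' of [5], f_P + f_{P'} + f_{[5]\P} + f_{[5]\P'} ≤ 3(n−6), where f_S is the number of F ∈ F with F ∩ [5] = S. Moreover, equality holds only if {f_P, f_{P'}} = {0, 2n−13}. -/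
/-!
A member of `F` with trace `S` on `[5]` is determined by its tail, a `(4 - |S|)`-subset of the
`n - 5` points outside `[5]`, and members with disjoint traces have intersecting tails. So the
tails of trace `P` (pairs) and of trace `[5] \ P` (singletons) cross-intersect, as do the pair
families of traces `P` and `P'`. A singleton tail `{u}` makes the `P`-tails a star at `u`; a
`P`-tail confines the singleton tails to its two points; a member `M` avoiding `P`, which exists
since `τ(F) ≥ 3`, has at most two points outside `[5]` and all `P`-tails meet them, whence
`f_P ≤ 2n - 13`. Finally, if `f_P ≥ 3` and `f_{P'} ≥ 5`, some point lies in three `P'`-tails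
and then in every tail of either family, so both are stars of size at most `n - 6`. The bound
and its equality case follow from these estimates by linear arithmetic.
-/

open Finset

variable {α : Type*}

theorem subset_of_not_disjoint_of_card_le_one {s t : Finset α} (hs : #s ≤ 1)
    (h : ¬Disjoint s t) : s ⊆ t := by
  obtain ⟨a, has, hat⟩ := not_disjoint_iff.1 h
  intro b hb
  rwa [card_le_one.1 hs b hb a has]

variable [DecidableEq α]

section PairFamilies

variable {G : Finset α} {𝒜 ℬ : Finset (Finset α)}

theorem card_le_of_forall_erase_subset {V : Finset α} {v : α}
    (h𝒜 : ∀ T ∈ 𝒜, v ∈ T ∧ #T = 2 ∧ T.erase v ⊆ V) : #𝒜 ≤ #V := by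
  calc #𝒜 ≤ #(V.powersetCard 1) := by
        refine card_le_card_of_injOn (·.erase v) (fun T hT => ?_)
          ((erase_injOn' v).mono fun T hT => (h𝒜 T hT).1)
        obtain ⟨hvT, hT2, hTV⟩ := h𝒜 T hT
        rw [mem_coe, mem_powersetCard, card_erase_of_mem hvT, hT2]
        exact ⟨hTV, rfl⟩
    _ = #V := by rw [card_powersetCard, Nat.choose_one_right]

theorem card_le_card_sub_one_of_forall_mem {v : α} (h𝒜 : 𝒜 ⊆ G.powersetCard 2)
    (hv : ∀ T ∈ 𝒜, v ∈ T) : #𝒜 ≤ #G - 1 := by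
  obtain rfl | ⟨T, hT⟩ := 𝒜.eq_empty_or_nonempty
  · simp
  have hG : ∀ T ∈ 𝒜, T ⊆ G ∧ #T = 2 := fun T hT => mem_powersetCard.1 (h𝒜 hT)
  rw [← card_erase_of_mem ((hG T hT).1 (hv T hT))]
  exact card_le_of_forall_erase_subset fun T hT =>
    ⟨hv T hT, (hG T hT).2, erase_subset_erase v (hG T hT).1⟩

theorem mem_of_two_lt_card_filter_mem {S : Finset α} {v : α} (h𝒜 : ∀ T ∈ 𝒜, #T = 2)
    (hv : 2 < #(𝒜.filter (v ∈ ·))) (hS : #S ≤ 2) (hmeet : ∀ T ∈ 𝒜, ¬Disjoint T S) :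
    v ∈ S := by
  by_contra hvS
  have hsub : ∀ T ∈ 𝒜.filter (v ∈ ·), v ∈ T ∧ #T = 2 ∧ T.erase v ⊆ S := by
    intro T hT
    obtain ⟨hT𝒜, hvT⟩ := mem_filter.1 hT
    refine ⟨hvT, h𝒜 T hT𝒜, subset_of_not_disjoint_of_card_le_one ?_ ?_⟩
    · rw [card_erase_of_mem hvT, h𝒜 T hT𝒜]
    · obtain ⟨z, hzT, hzS⟩ := not_disjoint_iff.1 (hmeet T hT𝒜)
      exact not_disjoint_iff.2 ⟨z, mem_erase.2 ⟨fun hz => hvS (hz ▸ hzS), hzT⟩, hzS⟩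
  have := card_le_of_forall_erase_subset hsub
  omega

theorem card_le_sum_card_filter_mem {T : Finset α} (h : ∀ S ∈ ℬ, ¬Disjoint T S) :
    #ℬ ≤ ∑ x ∈ T, #(ℬ.filter (x ∈ ·)) :=
  calc #ℬ ≤ #(T.biUnion fun x => ℬ.filter (x ∈ ·)) := card_le_card fun S hS => by
        obtain ⟨x, hxT, hxS⟩ := not_disjoint_iff.1 (h S hS)
        exact mem_biUnion.2 ⟨x, hxT, mem_filter.2 ⟨hS, hxS⟩⟩
    _ ≤ _ := card_biUnion_le

theorem card_le_card_sub_one_of_cross (h𝒜 : 𝒜 ⊆ G.powersetCard 2)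
    (hℬ : ℬ ⊆ G.powersetCard 2) (hcross : ∀ T ∈ 𝒜, ∀ S ∈ ℬ, ¬Disjoint T S)
    (h𝒜3 : 3 ≤ #𝒜) (hℬ5 : 5 ≤ #ℬ) : #𝒜 ≤ #G - 1 ∧ #ℬ ≤ #G - 1 := by
  have card_two : ∀ {𝒳 : Finset (Finset α)}, 𝒳 ⊆ G.powersetCard 2 → ∀ T ∈ 𝒳, #T = 2 :=
    fun h T hT => (mem_powersetCard.1 (h hT)).2
  obtain ⟨T₀, hT₀⟩ := card_pos.1 (by omega : 0 < #𝒜)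
  -- Otherwise the two points of `T₀`, which every member of `ℬ` meets, cover at most four.
  obtain ⟨v, hv⟩ : ∃ v, 2 < #(ℬ.filter (v ∈ ·)) := by
    by_contra! hdeg
    have hsum := (card_le_sum_card_filter_mem (hcross T₀ hT₀)).trans
      (sum_le_card_nsmul T₀ _ 2 fun x _ => hdeg x)
    rw [card_two h𝒜 T₀ hT₀, smul_eq_mul] at hsum
    omega
  have h𝒜v : ∀ T ∈ 𝒜, v ∈ T := fun T hT =>
    mem_of_two_lt_card_filter_mem (card_two hℬ) hv (card_two h𝒜 T hT).le
      fun S hS => disjoint_comm.not.1 (hcross T hT S hS)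
  have hℬv : ∀ S ∈ ℬ, v ∈ S := fun S hS =>
    mem_of_two_lt_card_filter_mem (card_two h𝒜) (by rwa [filter_true_of_mem h𝒜v])
      (card_two hℬ S hS).le fun T hT => hcross T hT S hS
  exact ⟨card_le_card_sub_one_of_forall_mem h𝒜 h𝒜v, card_le_card_sub_one_of_forall_mem hℬ hℬv⟩

theorem card_le_two_mul_card_sub_three_of_mem_or_mem {w₁ w₂ : α}
    (h𝒜 : 𝒜 ⊆ G.powersetCard 2) (hw₁ : w₁ ∈ G) (hw : ∀ T ∈ 𝒜, w₁ ∈ T ∨ w₂ ∈ T) :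
    #𝒜 ≤ 2 * #G - 3 := by
  have h₁ : #(𝒜.filter (w₁ ∈ ·)) ≤ #G - 1 :=
    card_le_card_sub_one_of_forall_mem ((filter_subset _ _).trans h𝒜)
      fun T hT => (mem_filter.1 hT).2
  have h₂ : #(𝒜.filter (w₁ ∉ ·)) ≤ #(G.erase w₁) - 1 := by
    refine card_le_card_sub_one_of_forall_mem (v := w₂) (fun T hT => ?_) fun T hT => ?_
    all_goals obtain ⟨hT𝒜, hw₁T⟩ := mem_filter.1 hT
    · obtain ⟨hTG, hT2⟩ := mem_powersetCard.1 (h𝒜 hT𝒜)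
      exact mem_powersetCard.2 ⟨fun x hx => mem_erase.2 ⟨fun h => hw₁T (h ▸ hx), hTG hx⟩, hT2⟩
    · exact (hw T hT𝒜).resolve_left hw₁T
  rw [card_erase_of_mem hw₁] at h₂
  have := card_filter_add_card_filter_not (s := 𝒜) (w₁ ∈ ·)
  omega

theorem card_le_two_mul_card_sub_three_of_not_disjoint {W : Finset α}
    (h𝒜 : 𝒜 ⊆ G.powersetCard 2) (hWG : W ⊆ G) (hW : #W ≤ 2)
    (hmeet : ∀ T ∈ 𝒜, ¬Disjoint T W) : #𝒜 ≤ 2 * #G - 3 := by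
  obtain rfl | ⟨T₀, hT₀⟩ := 𝒜.eq_empty_or_nonempty
  · simp
  obtain ⟨w₁, -, hw₁⟩ := not_disjoint_iff.1 (hmeet T₀ hT₀)
  have : Nonempty α := ⟨w₁⟩
  obtain ⟨w₂, hw₂⟩ := card_le_one_iff_subset_singleton.1
    (by rw [card_erase_of_mem hw₁]; omega : #(W.erase w₁) ≤ 1)
  refine card_le_two_mul_card_sub_three_of_mem_or_mem (w₂ := w₂) h𝒜 (hWG hw₁) fun T hT => ?_
  obtain ⟨z, hzT, hzW⟩ := not_disjoint_iff.1 (hmeet T hT)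
  by_cases hz : z = w₁
  · exact .inl (hz ▸ hzT)
  · exact .inr (mem_singleton.1 (hw₂ (mem_erase.2 ⟨hz, hzW⟩)) ▸ hzT)

theorem pair_singleton_bounds {𝒞 : Finset (Finset α)} (h𝒜 : 𝒜 ⊆ G.powersetCard 2)
    (h𝒞 : 𝒞 ⊆ G.powersetCard 1) (hcross : ∀ T ∈ 𝒜, ∀ s ∈ 𝒞, ¬Disjoint s T) :
    #𝒞 ≤ #G ∧ (#𝒞 = 0 ∨ #𝒜 ≤ #G - 1) ∧ (#𝒜 = 0 ∨ #𝒞 ≤ 2) ∧ (#𝒞 ≤ 1 ∨ #𝒜 ≤ 1) := by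
  have hsub : ∀ T ∈ 𝒜, ∀ s ∈ 𝒞, s ⊆ T := fun T hT s hs =>
    subset_of_not_disjoint_of_card_le_one (mem_powersetCard.1 (h𝒞 hs)).2.le (hcross T hT s hs)
  have singleton : ∀ s ∈ 𝒞, ∃ u, s = {u} := fun s hs =>
    card_eq_one.1 (mem_powersetCard.1 (h𝒞 hs)).2
  refine ⟨?_, ?_, ?_, ?_⟩
  · simpa using card_le_card h𝒞
  · obtain h | ⟨s, hs⟩ := 𝒞.eq_empty_or_nonempty
    · simp [h]
    obtain ⟨u, rfl⟩ := singleton s hs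
    exact .inr (card_le_card_sub_one_of_forall_mem h𝒜 fun T hT =>
      singleton_subset_iff.1 (hsub T hT _ hs))
  · obtain h | ⟨T, hT⟩ := 𝒜.eq_empty_or_nonempty
    · simp [h]
    have h𝒞T : 𝒞 ⊆ T.powersetCard 1 := fun s hs =>
      mem_powersetCard.2 ⟨hsub T hT s hs, (mem_powersetCard.1 (h𝒞 hs)).2⟩
    refine .inr ((card_le_card h𝒞T).trans ?_)
    simp [(mem_powersetCard.1 (h𝒜 hT)).2]
  · refine or_iff_not_imp_left.2 fun h𝒞1 => card_le_one.2 fun T hT T' hT' => ?_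
    obtain ⟨s₁, hs₁, s₂, hs₂, hne⟩ := one_lt_card.1 (not_le.1 h𝒞1)
    obtain ⟨u₁, rfl⟩ := singleton s₁ hs₁
    obtain ⟨u₂, rfl⟩ := singleton s₂ hs₂
    have hpair : ∀ T ∈ 𝒜, T = {u₁, u₂} := fun T hT =>
      (eq_of_subset_of_card_le (insert_subset (singleton_subset_iff.1 (hsub T hT _ hs₁))
        (hsub T hT _ hs₂)) (by rw [(mem_powersetCard.1 (h𝒜 hT)).2,
          card_pair fun h => hne (by rw [h])])).symm
    rw [hpair T hT, hpair T' hT']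

end PairFamilies

section Tails

variable {F : Finset (Finset α)} {X U P P' : Finset α}

def tails (F : Finset (Finset α)) (U S : Finset α) : Finset (Finset α) :=
  (F.filter (· ∩ U = S)).image (· \ U)

theorem card_tails (F : Finset (Finset α)) (U S : Finset α) :
    #(tails F U S) = #(F.filter (· ∩ U = S)) := by
  refine card_image_of_injOn fun A hA B hB h => ?_
  rw [coe_filter] at hA hB
  rw [← sdiff_union_inter A U, ← sdiff_union_inter B U, hA.2, hB.2]
  exact congrArg (· ∪ S) h

theorem tails_subset_powersetCard {k : ℕ} (hF : ∀ A ∈ F, A ⊆ X ∧ #A = k) (U S : Finset α) :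
    tails F U S ⊆ (X \ U).powersetCard (k - #S) := by
  intro T hT
  obtain ⟨A, hA, rfl⟩ := mem_image.1 hT
  obtain ⟨hAF, rfl⟩ := mem_filter.1 hA
  rw [mem_powersetCard, ← (hF A hAF).2, ← card_sdiff_add_card_inter A U]
  exact ⟨sdiff_subset_sdiff (hF A hAF).1 le_rfl, by omega⟩

theorem not_disjoint_of_mem_tails (hF : (F : Set (Finset α)).Intersecting) {S S' T T' : Finset α}
    (hSS' : Disjoint S S') (hT : T ∈ tails F U S) (hT' : T' ∈ tails F U S') :
    ¬Disjoint T T' := by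
  obtain ⟨A, hA, rfl⟩ := mem_image.1 hT
  obtain ⟨B, hB, rfl⟩ := mem_image.1 hT'
  obtain ⟨hAF, rfl⟩ := mem_filter.1 hA
  obtain ⟨hBF, rfl⟩ := mem_filter.1 hB
  intro hd
  apply hF hAF hBF
  rw [← sdiff_union_inter A U, ← sdiff_union_inter B U]
  exact disjoint_union_left.2
    ⟨disjoint_union_right.2 ⟨hd, sdiff_disjoint.mono_right inter_subset_right⟩,
      disjoint_union_right.2 ⟨disjoint_sdiff.mono_left inter_subset_right, hSS'⟩⟩

theorem tails_pair_singleton_bounds {Q : Finset α} (hF : ∀ A ∈ F, A ⊆ X ∧ #A = 4)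
    (hint : (F : Set (Finset α)).Intersecting) (hP : #P = 2) (hQ : #Q = 3) (hPQ : Disjoint P Q) :
    #(tails F U Q) ≤ #(X \ U) ∧ (#(tails F U Q) = 0 ∨ #(tails F U P) ≤ #(X \ U) - 1) ∧
      (#(tails F U P) = 0 ∨ #(tails F U Q) ≤ 2) ∧
      (#(tails F U Q) ≤ 1 ∨ #(tails F U P) ≤ 1) :=
  pair_singleton_bounds (by simpa [hP] using tails_subset_powersetCard hF U P)
    (by simpa [hQ] using tails_subset_powersetCard hF U Q)
    fun _ hT _ hs => not_disjoint_of_mem_tails hint hPQ.symm hs hT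

theorem card_tails_le_two_mul_card_sub_three (hF : ∀ A ∈ F, A ⊆ X ∧ #A = 4)
    (hint : (F : Set (Finset α)).Intersecting) (hP : #P = 2) {M : Finset α} (hM : M ∈ F)
    (hPM : Disjoint P M) (hMU : 2 ≤ #(M ∩ U)) : #(tails F U P) ≤ 2 * #(X \ U) - 3 := by
  have hMtail : M \ U ∈ tails F U (M ∩ U) := mem_image.2 ⟨M, mem_filter.2 ⟨hM, rfl⟩, rfl⟩
  refine card_le_two_mul_card_sub_three_of_not_disjoint
    (by simpa [hP] using tails_subset_powersetCard hF U P)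
    (sdiff_subset_sdiff (hF M hM).1 le_rfl) ?_
    fun T hT => not_disjoint_of_mem_tails hint (hPM.mono_right inter_subset_left) hT hMtail
  have := card_sdiff_add_card_inter M U
  have := (hF M hM).2
  omega

theorem card_tails_le_of_cross (hF : ∀ A ∈ F, A ⊆ X ∧ #A = 4)
    (hint : (F : Set (Finset α)).Intersecting) (hP : #P = 2) (hP' : #P' = 2)
    (hPP' : Disjoint P P') (h3 : 3 ≤ #(tails F U P)) (h5 : 5 ≤ #(tails F U P')) :
    #(tails F U P) ≤ #(X \ U) - 1 ∧ #(tails F U P') ≤ #(X \ U) - 1 :=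
  card_le_card_sub_one_of_cross (by simpa [hP] using tails_subset_powersetCard hF U P)
    (by simpa [hP'] using tails_subset_powersetCard hF U P')
    (fun _ hT _ hT' => not_disjoint_of_mem_tails hint hPP' hT hT') h3 h5

end Tails

/-- For an intersecting family `F ⊆ ([n] choose 4)` with `τ(F) ≥ 3`, `n ≥ 9`, and
`|F ∩ [5]| ≥ 2` for all `F ∈ F`: for disjoint 2-subsets `P, P' ⊆ [5]`,
`f_P + f_{P'} + f_{[5]\P} + f_{[5]\P'} ≤ 3(n-6)`, with equality only if
`{f_P, f_{P'}} = {0, 2n-13}`. -/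
theorem k4_four_terms_bound
    (n : ℕ) (hn : 9 ≤ n) (F : Finset (Finset ℕ))
    (hFsub : ∀ A ∈ F, A ⊆ Finset.Icc 1 n ∧ A.card = 4)
    (hint : ∀ A ∈ F, ∀ A' ∈ F, (A ∩ A').Nonempty)
    (hτ : ∀ S ⊆ Finset.Icc 1 n, S.card ≤ 2 → ∃ A ∈ F, S ∩ A = ∅)
    (hU2 : ∀ A ∈ F, 2 ≤ (A ∩ Finset.Icc 1 5).card)
    (P P' : Finset ℕ) (hP : P ⊆ Finset.Icc 1 5) (hP' : P' ⊆ Finset.Icc 1 5)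
    (hPcard : P.card = 2) (hP'card : P'.card = 2) (hdisj : P ∩ P' = ∅)
    (fP fP' fQ fQ' : ℕ)
    (hfP : fP = (F.filter (fun A => A ∩ Finset.Icc 1 5 = P)).card)
    (hfP' : fP' = (F.filter (fun A => A ∩ Finset.Icc 1 5 = P')).card)
    (hfQ : fQ = (F.filter (fun A => A ∩ Finset.Icc 1 5 = Finset.Icc 1 5 \ P)).card)
    (hfQ' : fQ' = (F.filter (fun A => A ∩ Finset.Icc 1 5 = Finset.Icc 1 5 \ P')).card) :
    fP + fP' + fQ + fQ' ≤ 3 * (n - 6) ∧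
      (fP + fP' + fQ + fQ' = 3 * (n - 6) →
        (fP = 0 ∧ fP' = 2 * n - 13) ∨ (fP' = 0 ∧ fP = 2 * n - 13)) := by
  have hint' : (F : Set (Finset ℕ)).Intersecting := fun A hA B hB =>
    not_disjoint_iff_nonempty_inter.2 (hint A hA B hB)
  have h5n : Icc 1 5 ⊆ Icc 1 n := Icc_subset_Icc le_rfl (by omega)
  have hW : #(Icc 1 n \ Icc 1 5) = n - 5 := by rw [card_sdiff_of_subset h5n]; simp
  have hPdisj : Disjoint P P' := disjoint_iff_inter_eq_empty.2 hdisj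
  have hpair : ∀ R ⊆ Icc 1 5, #R = 2 → #(tails F (Icc 1 5) R) ≤ 2 * (n - 5) - 3 := by
    intro R hR hR2
    obtain ⟨M, hM, hRM⟩ := hτ R (hR.trans h5n) hR2.le
    exact hW ▸ card_tails_le_two_mul_card_sub_three hFsub hint' hR2 hM
      (disjoint_iff_inter_eq_empty.2 hRM) (hU2 M hM)
  have hcompl : ∀ R ⊆ Icc 1 5, #R = 2 → #(Icc 1 5 \ R) = 3 := fun R hR hR2 => by
    simp [card_sdiff_of_subset hR, hR2]
  have hpairP := hpair P hP hPcard
  have hpairP' := hpair P' hP' hP'card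
  have hsingP := tails_pair_singleton_bounds hFsub hint' hPcard (hcompl P hP hPcard)
    (U := Icc 1 5) disjoint_sdiff
  have hsingP' := tails_pair_singleton_bounds hFsub hint' hP'card (hcompl P' hP' hP'card)
    (U := Icc 1 5) disjoint_sdiff
  have hcross := card_tails_le_of_cross hFsub hint' hPcard hP'card hPdisj (U := Icc 1 5)
  have hcross' := card_tails_le_of_cross hFsub hint' hP'card hPcard hPdisj.symm (U := Icc 1 5)
  rw [← card_tails] at hfP hfP' hfQ hfQ'
  rw [hW] at hsingP hsingP' hcross hcross'
  subst hfP hfP' hfQ hfQ'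
  omega
end

section
/- Let F ⊆ ([n] choose k) be an intersecting family, U ⊆ [n], and A, B ⊆ U disjoint. If n ≥ 2k − |A| − |B| + |U|, then f_A / C(n−|U|, k−|A|) + f_B / C(n−|U|, k−|B|) ≤ 1, where f_S is the number of F ∈ F with F ∩ U = S. -/
/-!
Removing `U` maps the members of `F` with trace `A` on `U` injectively onto a family of
`(k - |A|)`-subsets of `V = [n] \ U`, and likewise for `B`; since `A ∩ B = ∅` and `F` is
intersecting, the two families are cross-intersecting. For cross-intersecting
`𝒜 ⊆ (V choose a)`, `ℬ ⊆ (V choose b)`, double counting the disjoint pairs `(s, t)` with `s ∈ 𝒜`,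
`t ∉ ℬ` gives `|𝒜| C(m - a, b) ≤ (C(m, b) - |ℬ|) C(m - b, a)` with `m = |V|`, and dividing by
`C(m, a) C(m - a, b) = C(m, b) C(m - b, a)`, nonzero as `a + b ≤ m`, yields the inequality.
-/

open Finset

theorem Nat.choose_mul_choose_sub_comm (m a b : ℕ) :
    m.choose a * (m - a).choose b = m.choose b * (m - b).choose a := by
  rw [← Nat.add_sub_cancel_left (n := a) (m := b), ← Nat.choose_mul (Nat.le_add_right a b),
    Nat.add_sub_cancel_left, ← Nat.add_sub_cancel (n := a) (m := b),
    ← Nat.choose_mul (Nat.le_add_left b a), Nat.add_sub_cancel, Nat.choose_symm_add]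

namespace Finset

variable {α : Type*} {V : Finset α} {a b : ℕ} {𝒜 ℬ : Finset (Finset α)}

theorem card_div_choose_le_one (h𝒜 : 𝒜 ⊆ V.powersetCard a) : (#𝒜 : ℚ) / (#V).choose a ≤ 1 := by
  rw [← card_powersetCard]
  exact div_le_one_of_le₀ (mod_cast card_le_card h𝒜) (Nat.cast_nonneg _)

variable [DecidableEq α]

theorem filter_disjoint_powersetCard (t : Finset α) (a : ℕ) :
    {s ∈ V.powersetCard a | Disjoint s t} = (V \ t).powersetCard a := by
  ext s
  simp only [mem_filter, mem_powersetCard, subset_sdiff, and_right_comm]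

theorem card_filter_disjoint_powersetCard {t : Finset α} (ht : t ⊆ V) (a : ℕ) :
    #{s ∈ V.powersetCard a | Disjoint s t} = (#V - #t).choose a := by
  rw [filter_disjoint_powersetCard, card_powersetCard, card_sdiff_of_subset ht]

theorem card_mul_choose_le_card_sdiff_mul_choose (h𝒜 : 𝒜 ⊆ V.powersetCard a)
    (hcross : ∀ s ∈ 𝒜, ∀ t ∈ ℬ, ¬Disjoint s t) :
    #𝒜 * (#V - a).choose b ≤ #(V.powersetCard b \ ℬ) * (#V - b).choose a := by
  refine card_nsmul_le_card_nsmul (R := ℕ) (fun s t ↦ Disjoint s t) (fun s hs ↦ ?_) (fun t ht ↦ ?_)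
  · obtain ⟨hsV, hsa⟩ := mem_powersetCard.1 (h𝒜 hs)
    have hout : (V.powersetCard b \ ℬ).bipartiteAbove (fun s t ↦ Disjoint s t) s
        = {t ∈ V.powersetCard b | Disjoint t s} := by
      ext t
      simp only [mem_bipartiteAbove, mem_sdiff, mem_filter, disjoint_comm (a := s)]
      exact ⟨fun h ↦ ⟨h.1.1, h.2⟩, fun h ↦ ⟨⟨h.1, fun ht ↦ hcross s hs t ht h.2.symm⟩, h.2⟩⟩
    rw [hout, card_filter_disjoint_powersetCard hsV, hsa, Nat.cast_id]
  · obtain ⟨htV, htb⟩ := mem_powersetCard.1 (mem_sdiff.1 ht).1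
    rw [← htb, ← card_filter_disjoint_powersetCard htV]
    exact card_le_card (filter_subset_filter _ h𝒜)

theorem card_div_choose_add_card_div_choose_le_one
    (h𝒜 : 𝒜 ⊆ V.powersetCard a) (hℬ : ℬ ⊆ V.powersetCard b)
    (hcross : ∀ s ∈ 𝒜, ∀ t ∈ ℬ, ¬Disjoint s t) (hab : a + b ≤ #V) :
    (#𝒜 : ℚ) / (#V).choose a + (#ℬ : ℚ) / (#V).choose b ≤ 1 := by
  have hcount := card_mul_choose_le_card_sdiff_mul_choose (b := b) h𝒜 hcross
  rw [card_sdiff_of_subset hℬ, card_powersetCard] at hcount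
  have hℬle : #ℬ ≤ (#V).choose b := by simpa using card_le_card hℬ
  have hcount' : (#𝒜 : ℚ) * (#V - a).choose b ≤ ((#V).choose b - #ℬ) * (#V - b).choose a := by
    exact_mod_cast hcount
  have hcomm : ((#V).choose a : ℚ) * (#V - a).choose b = (#V).choose b * (#V - b).choose a := by
    exact_mod_cast Nat.choose_mul_choose_sub_comm _ _ _
  have hpos₁ : (0 : ℚ) < (#V).choose a := by exact_mod_cast Nat.choose_pos (by omega)
  have hpos₂ : (0 : ℚ) < (#V).choose b := by exact_mod_cast Nat.choose_pos (by omega)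
  have hpos₃ : (0 : ℚ) < (#V - a).choose b := by exact_mod_cast Nat.choose_pos (by omega)
  rw [div_add_div _ _ hpos₁.ne' hpos₂.ne', div_le_one (by positivity)]
  nlinarith

/-- The family `F(S, U)` of the statement. -/
def traceFamily (F : Finset (Finset α)) (U S : Finset α) : Finset (Finset α) :=
  {X ∈ F | X ∩ U = S}.image (· \ U)

variable {F : Finset (Finset α)} {U S : Finset α}

theorem card_traceFamily : #(traceFamily F U S) = #(F.filter fun X => X ∩ U = S) := by
  refine card_image_of_injOn fun X hX Y hY hXY ↦ ?_
  simp only [coe_filter, Set.mem_ofPred_eq] at hX hY hXY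
  rw [← sdiff_union_inter X U, ← sdiff_union_inter Y U, hX.2, hY.2, hXY]

theorem traceFamily_subset_powersetCard {W : Finset α} {k : ℕ}
    (hF : ∀ X ∈ F, X ⊆ W ∧ #X = k) : traceFamily F U S ⊆ (W \ U).powersetCard (k - #S) := by
  simp only [traceFamily, subset_iff, mem_image, mem_filter, mem_powersetCard]
  rintro _ ⟨X, ⟨hX, hXU⟩, rfl⟩
  obtain ⟨hXW, hXk⟩ := hF X hX
  refine ⟨sdiff_subset_sdiff hXW le_rfl, ?_⟩
  have hsplit := card_sdiff_add_card_inter X U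
  rw [hXU] at hsplit
  omega

theorem traceFamily_eq_empty {k : ℕ} (hF : ∀ X ∈ F, #X = k) (hS : k < #S) :
    traceFamily F U S = ∅ := by
  simp only [traceFamily, image_eq_empty, filter_eq_empty_iff]
  rintro X hX rfl
  exact hS.not_ge (hF X hX ▸ card_le_card inter_subset_left)

theorem not_disjoint_traceFamily {A B : Finset α} (hF : ∀ X ∈ F, ∀ Y ∈ F, ¬Disjoint X Y)
    (hAB : Disjoint A B) : ∀ s ∈ traceFamily F U A, ∀ t ∈ traceFamily F U B, ¬Disjoint s t := by
  simp only [traceFamily, mem_image, mem_filter]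
  rintro _ ⟨X, ⟨hX, rfl⟩, rfl⟩ _ ⟨Y, ⟨hY, rfl⟩, rfl⟩ hXY
  refine hF X hX Y hY (disjoint_left.2 fun z hzX hzY ↦ ?_)
  by_cases hzU : z ∈ U
  · exact disjoint_left.1 hAB (mem_inter.2 ⟨hzX, hzU⟩) (mem_inter.2 ⟨hzY, hzU⟩)
  · exact disjoint_left.1 hXY (mem_sdiff.2 ⟨hzX, hzU⟩) (mem_sdiff.2 ⟨hzY, hzU⟩)

end Finset

theorem sperner_averaging_general
    (n k : ℕ) (F : Finset (Finset ℕ))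
    (hFsub : ∀ X ∈ F, X ⊆ Finset.Icc 1 n ∧ X.card = k)
    (hint : ∀ X ∈ F, ∀ X' ∈ F, (X ∩ X').Nonempty)
    (U : Finset ℕ) (hU : U ⊆ Finset.Icc 1 n)
    (A B : Finset ℕ) (hdisj : A ∩ B = ∅)
    (hn : 2 * k + U.card ≤ n + A.card + B.card) :
    ((F.filter (fun X => X ∩ U = A)).card : ℚ) / ((n - U.card).choose (k - A.card)) +
      ((F.filter (fun X => X ∩ U = B)).card : ℚ) / ((n - U.card).choose (k - B.card))
      ≤ 1 := by
  have hV : #(Icc 1 n \ U) = n - #U := by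
    rw [card_sdiff_of_subset hU, Nat.card_Icc, Nat.add_sub_cancel]
  have hcard : ∀ X ∈ F, #X = k := fun X hX ↦ (hFsub X hX).2
  rw [← card_traceFamily, ← card_traceFamily, ← hV]
  by_cases hAk : #A ≤ k
  · by_cases hBk : #B ≤ k
    · refine card_div_choose_add_card_div_choose_le_one (traceFamily_subset_powersetCard hFsub)
        (traceFamily_subset_powersetCard hFsub) (not_disjoint_traceFamily (fun X hX Y hY ↦ ?_)
          (disjoint_iff_inter_eq_empty.2 hdisj)) (by omega)
      exact not_disjoint_iff_nonempty_inter.2 (hint X hX Y hY)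
    · rw [traceFamily_eq_empty hcard (not_le.1 hBk), card_empty, Nat.cast_zero, zero_div, add_zero]
      exact card_div_choose_le_one (traceFamily_subset_powersetCard hFsub)
  · rw [traceFamily_eq_empty hcard (not_le.1 hAk), card_empty, Nat.cast_zero, zero_div, zero_add]
    exact card_div_choose_le_one (traceFamily_subset_powersetCard hFsub)

/-- Sperner-type averaging inequality: for an intersecting family `F ⊆ ([n] choose k)`,
`U ⊆ [n]`, disjoint `A, B ⊆ U`, and `n ≥ 2k - |A| - |B| + |U|`,
`f_A / C(n-|U|, k-|A|) + f_B / C(n-|U|, k-|B|) ≤ 1`. -/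
theorem sperner_averaging
    (n k : ℕ) (F : Finset (Finset ℕ))
    (hFsub : ∀ X ∈ F, X ⊆ Finset.Icc 1 n ∧ X.card = k)
    (hint : ∀ X ∈ F, ∀ X' ∈ F, (X ∩ X').Nonempty)
    (U : Finset ℕ) (hU : U ⊆ Finset.Icc 1 n)
    (A B : Finset ℕ) (hA : A ⊆ U) (hB : B ⊆ U) (hdisj : A ∩ B = ∅)
    (hn : 2 * k + U.card ≤ n + A.card + B.card) :
    ((F.filter (fun X => X ∩ U = A)).card : ℚ) / ((n - U.card).choose (k - A.card)) +
      ((F.filter (fun X => X ∩ U = B)).card : ℚ) / ((n - U.card).choose (k - B.card))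
      ≤ 1 :=
  sperner_averaging_general n k F hFsub hint U hU A B hdisj hn
end

section
/- Let F ⊆ ([n] choose k) be an intersecting family with τ(F) ≥ 3, n > 2k, and |F ∩ [5]| ≥ 2 for all F ∈ F. Then for any disjoint 2-element subsets P, P' of [5], f_P + f_{P'} + f_{[5]\P} + f_{[5]\P'} ≤ C(n−5, k−2) + C(n−5, k−3), where f_S is the number of F ∈ F with F ∩ [5] = S. -/
open Finset Nat
open FinsetFamily

/-- Iterated local LYM inequality, rational form. -/
private lemma iter_lym_q {α : Type*} [DecidableEq α] [Fintype α] {r : ℕ}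
    (hr : r ≤ Fintype.card α) :
    ∀ i ≤ r, ∀ 𝒜 : Finset (Finset α), (𝒜 : Set (Finset α)).Sized r →
      (𝒜.card : ℚ) / (Fintype.card α).choose r ≤
        ((∂^[i] 𝒜).card : ℚ) / (Fintype.card α).choose (r - i) := by
  intro i
  induction i with
  | zero => intro _ 𝒜 _; simp
  | succ i ih =>
    intro hi 𝒜 h𝒜
    have hi' : i ≤ r := by omega
    refine (ih hi' 𝒜 h𝒜).trans ?_
    have hsized : ((∂^[i] 𝒜 : Finset (Finset α)) : Set (Finset α)).Sized (r - i) :=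
      h𝒜.shadow_iterate
    have hne : r - i ≠ 0 := by omega
    have h := Finset.card_div_choose_le_card_shadow_div_choose (𝕜 := ℚ) hne hsized
    rw [Function.iterate_succ_apply']
    have : r - i - 1 = r - (i + 1) := by omega
    rwa [this] at h

/-- Iterated local LYM inequality, natural number form. -/
private lemma iter_lym {α : Type*} [DecidableEq α] [Fintype α] {r i : ℕ}
    (hr : r ≤ Fintype.card α) (hi : i ≤ r) (𝒜 : Finset (Finset α))
    (h𝒜 : (𝒜 : Set (Finset α)).Sized r) :
    𝒜.card * (Fintype.card α).choose (r - i) ≤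
      (∂^[i] 𝒜).card * (Fintype.card α).choose r := by
  have h := iter_lym_q hr i hi 𝒜 h𝒜
  have h1 : (0 : ℚ) < (Fintype.card α).choose r := by
    exact_mod_cast Nat.choose_pos hr
  have h2 : (0 : ℚ) < (Fintype.card α).choose (r - i) := by
    exact_mod_cast Nat.choose_pos (le_trans (Nat.sub_le _ _) hr)
  rw [div_le_div_iff₀ h1 h2] at h
  exact_mod_cast h

/-- Fractional cross-intersecting bound:
if `𝒜` is `a`-uniform, `ℬ` is `b`-uniform, `a + b ≤ m`, and every member of `𝒜` meets
every member of `ℬ`, then `|𝒜|/C(m,a) + |ℬ|/C(m,b) ≤ 1` (cleared denominators). -/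
private lemma cross_bound {α : Type*} [DecidableEq α] [Fintype α] {a b : ℕ}
    {𝒜 ℬ : Finset (Finset α)}
    (h𝒜 : (𝒜 : Set (Finset α)).Sized a) (hℬ : (ℬ : Set (Finset α)).Sized b)
    (hab : a + b ≤ Fintype.card α)
    (cross : ∀ S ∈ 𝒜, ∀ T ∈ ℬ, (S ∩ T).Nonempty) :
    𝒜.card * (Fintype.card α).choose b + ℬ.card * (Fintype.card α).choose a ≤
      (Fintype.card α).choose a * (Fintype.card α).choose b := by
  set m := Fintype.card α with hm
  have ham : a ≤ m := by omega
  have hbm : b ≤ m := by omega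
  have h𝒞 : ((𝒜ᶜˢ : Finset (Finset α)) : Set (Finset α)).Sized (m - a) := h𝒜.compls
  set j := m - a - b with hj
  have hsub : (m - a) - j = b := by omega
  have hL := iter_lym (r := m - a) (i := j) (Nat.sub_le _ _) (by omega) (𝒜ᶜˢ) h𝒞
  rw [hsub, Nat.choose_symm ham, card_compls] at hL
  -- ℬ is disjoint from the iterated shadow of the complements
  have hdisj : Disjoint ℬ (∂^[j] (𝒜ᶜˢ)) := by
    rw [disjoint_right]
    intro T hT hTB
    rw [mem_shadow_iterate_iff_exists_sdiff] at hT
    obtain ⟨S', hS', hTS', -⟩ := hT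
    rw [mem_compls] at hS'
    obtain ⟨x, hx⟩ := cross _ hS' _ hTB
    rw [mem_inter] at hx
    exact absurd (hTS' hx.2) (by simpa using hx.1)
  have hunion : ℬ ∪ ∂^[j] (𝒜ᶜˢ) ⊆ powersetCard b univ := by
    intro T hT
    rw [mem_powersetCard]
    rcases mem_union.1 hT with h | h
    · exact ⟨subset_univ _, hℬ h⟩
    · have := h𝒞.shadow_iterate (k := j) h
      rw [hsub] at this
      exact ⟨subset_univ _, this⟩
  have hcard : ℬ.card + (∂^[j] (𝒜ᶜˢ)).card ≤ m.choose b := by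
    rw [← card_union_of_disjoint hdisj]
    calc (ℬ ∪ ∂^[j] (𝒜ᶜˢ)).card ≤ (powersetCard b (univ : Finset α)).card :=
          card_le_card hunion
      _ = m.choose b := by rw [card_powersetCard, Finset.card_univ]
  calc 𝒜.card * m.choose b + ℬ.card * m.choose a
      ≤ (∂^[j] (𝒜ᶜˢ)).card * m.choose a + ℬ.card * m.choose a := by
        exact Nat.add_le_add_right hL _
    _ = ((∂^[j] (𝒜ᶜˢ)).card + ℬ.card) * m.choose a := by ring
    _ ≤ m.choose b * m.choose a := by
        apply Nat.mul_le_mul_right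
        omega
    _ = m.choose a * m.choose b := by ring

/-- Cross-intersecting bound for families of subsets of a finite ground set `X ⊆ ℕ`. -/
private lemma cross_bound_nat (X : Finset ℕ) {a b : ℕ} {𝒜 ℬ : Finset (Finset ℕ)}
    (h𝒜 : ∀ S ∈ 𝒜, S ⊆ X ∧ S.card = a) (hℬ : ∀ T ∈ ℬ, T ⊆ X ∧ T.card = b)
    (hab : a + b ≤ X.card)
    (cross : ∀ S ∈ 𝒜, ∀ T ∈ ℬ, (S ∩ T).Nonempty) :
    𝒜.card * X.card.choose b + ℬ.card * X.card.choose a ≤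
      X.card.choose a * X.card.choose b := by
  classical
  set p : ℕ → Prop := fun x => x ∈ X with hp
  have key : ∀ (𝒞 : Finset (Finset ℕ)), (∀ S ∈ 𝒞, S ⊆ X) →
      ((𝒞.image (fun S => S.subtype p)).card = 𝒞.card ∧
       ∀ S ∈ 𝒞, ((S.subtype p).card = S.card)) := by
    intro 𝒞 h𝒞
    have hrec : ∀ S ∈ 𝒞, (S.subtype p).map (Function.Embedding.subtype p) = S := by
      intro S hS
      rw [Finset.subtype_map]
      exact Finset.filter_true_of_mem (fun x hx => h𝒞 S hS hx)
    constructor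
    · apply Finset.card_image_of_injOn
      intro S hS S' hS' hSS'
      have h' : Finset.subtype p S = Finset.subtype p S' := hSS'
      rw [← hrec S hS, ← hrec S' hS', h']
    · intro S hS
      calc (S.subtype p).card
          = ((S.subtype p).map (Function.Embedding.subtype p)).card :=
            (Finset.card_map _).symm
        _ = S.card := by rw [hrec S hS]
  obtain ⟨hcard𝒜, hsz𝒜⟩ := key 𝒜 (fun S hS => (h𝒜 S hS).1)
  obtain ⟨hcardℬ, hszℬ⟩ := key ℬ (fun T hT => (hℬ T hT).1)
  have hm : Fintype.card {x // p x} = X.card := Fintype.card_coe X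
  have h𝒜' : (((𝒜.image (fun S => S.subtype p)) : Finset (Finset {x // p x})) :
      Set (Finset {x // p x})).Sized a := by
    intro s hs
    simp only [coe_image, Set.mem_image, mem_coe] at hs
    obtain ⟨S, hS, rfl⟩ := hs
    rw [hsz𝒜 S hS]
    exact (h𝒜 S hS).2
  have hℬ' : (((ℬ.image (fun T => T.subtype p)) : Finset (Finset {x // p x})) :
      Set (Finset {x // p x})).Sized b := by
    intro t ht
    simp only [coe_image, Set.mem_image, mem_coe] at ht
    obtain ⟨T, hT, rfl⟩ := ht
    rw [hszℬ T hT]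
    exact (hℬ T hT).2
  have cross' : ∀ s ∈ 𝒜.image (fun S => S.subtype p),
      ∀ t ∈ ℬ.image (fun T => T.subtype p), (s ∩ t).Nonempty := by
    intro s hs t ht
    rw [mem_image] at hs ht
    obtain ⟨S, hS, rfl⟩ := hs
    obtain ⟨T, hT, rfl⟩ := ht
    obtain ⟨x, hx⟩ := cross S hS T hT
    rw [mem_inter] at hx
    have hxX : p x := (h𝒜 S hS).1 hx.1
    exact ⟨⟨x, hxX⟩, by simp [Finset.mem_subtype, hx.1, hx.2]⟩
  have := cross_bound (α := {x // p x}) h𝒜' hℬ' (by rw [hm]; exact hab) cross'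
  rwa [hm, hcard𝒜, hcardℬ] at this

set_option maxHeartbeats 2000000 in
/-- For an intersecting `F ⊆ ([n] choose k)` with `τ(F) ≥ 3`, `n > 2k`, and
`|F ∩ [5]| ≥ 2` for all `F ∈ F`: for disjoint 2-subsets `P, P' ⊆ [5]`,
`f_P + f_{P'} + f_{[5]\P} + f_{[5]\P'} ≤ C(n-5, k-2) + C(n-5, k-3)`. -/
theorem four_terms_bound_general
    (n k : ℕ) (hn : 2 * k < n) (F : Finset (Finset ℕ))
    (hFsub : ∀ A ∈ F, A ⊆ Finset.Icc 1 n ∧ A.card = k)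
    (hint : ∀ A ∈ F, ∀ A' ∈ F, (A ∩ A').Nonempty)
    (hτ : ∀ S ⊆ Finset.Icc 1 n, S.card ≤ 2 → ∃ A ∈ F, S ∩ A = ∅)
    (hU2 : ∀ A ∈ F, 2 ≤ (A ∩ Finset.Icc 1 5).card)
    (P P' : Finset ℕ) (hP : P ⊆ Finset.Icc 1 5) (hP' : P' ⊆ Finset.Icc 1 5)
    (hPcard : P.card = 2) (hP'card : P'.card = 2) (hdisj : P ∩ P' = ∅) :
    (F.filter (fun A => A ∩ Finset.Icc 1 5 = P)).card +
      (F.filter (fun A => A ∩ Finset.Icc 1 5 = P')).card +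
      (F.filter (fun A => A ∩ Finset.Icc 1 5 = Finset.Icc 1 5 \ P)).card +
      (F.filter (fun A => A ∩ Finset.Icc 1 5 = Finset.Icc 1 5 \ P')).card ≤
      (n - 5).choose (k - 2) + (n - 5).choose (k - 3) := by
  classical
  set U : Finset ℕ := Finset.Icc 1 5 with hU
  -- F is nonempty, so k ≥ 2 and n ≥ 5
  obtain ⟨A₀, hA₀, -⟩ := hτ ∅ (by simp) (by simp)
  have hk2 : 2 ≤ k := by
    have h1 := hU2 A₀ hA₀
    have h2 : (A₀ ∩ U).card ≤ A₀.card := card_le_card (inter_subset_left)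
    rw [(hFsub A₀ hA₀).2] at h2
    omega
  have hn5 : 5 ≤ n := by omega
  have hUcard : U.card = 5 := by rw [hU, Nat.card_Icc]
  have hUsub : U ⊆ Finset.Icc 1 n := by
    rw [hU]; exact Finset.Icc_subset_Icc_right hn5
  set X : Finset ℕ := Finset.Icc 1 n \ U with hX
  have hXcard : X.card = n - 5 := by
    rw [hX, card_sdiff_of_subset hUsub, Nat.card_Icc, hUcard]
    omega
  set m : ℕ := n - 5 with hmdef
  set a : ℕ := k - 2 with hadef
  set b : ℕ := k - 3 with hbdef
  -- tail families
  set tails : Finset ℕ → Finset (Finset ℕ) :=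
    fun D => (F.filter (fun A => A ∩ U = D)).image (fun A => A \ U) with htails
  -- basic properties of tail families
  have htail_card : ∀ D : Finset ℕ,
      (tails D).card = (F.filter (fun A => A ∩ U = D)).card := by
    intro D
    apply Finset.card_image_of_injOn
    intro A hA A' hA' hAA'
    rw [mem_coe, mem_filter] at hA hA'
    have h' : A \ U = A' \ U := hAA'
    have e1 : A = A \ U ∪ (A ∩ U) := (Finset.sdiff_union_inter A U).symm
    have e2 : A' = A' \ U ∪ (A' ∩ U) := (Finset.sdiff_union_inter A' U).symm
    rw [e1, e2, hA.2, hA'.2, h']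
  have htail_mem : ∀ D : Finset ℕ, D ⊆ U → ∀ T ∈ tails D, T ⊆ X ∧ T.card = k - D.card := by
    intro D hD T hT
    rw [htails, mem_image] at hT
    obtain ⟨A, hA, rfl⟩ := hT
    rw [mem_filter] at hA
    obtain ⟨hAF, hAD⟩ := hA
    constructor
    · rw [hX]
      exact Finset.sdiff_subset_sdiff (hFsub A hAF).1 (le_refl U)
    · have := Finset.card_inter_add_card_sdiff A U
      rw [hAD, (hFsub A hAF).2] at this
      omega
  have htail_cross : ∀ D D' : Finset ℕ, D ∩ D' = ∅ →
      ∀ T ∈ tails D, ∀ T' ∈ tails D', (T ∩ T').Nonempty := by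
    intro D D' hDD' T hT T' hT'
    rw [htails, mem_image] at hT hT'
    obtain ⟨A, hA, rfl⟩ := hT
    obtain ⟨A', hA', rfl⟩ := hT'
    rw [mem_filter] at hA hA'
    obtain ⟨x, hx⟩ := hint A hA.1 A' hA'.1
    rw [mem_inter] at hx
    refine ⟨x, ?_⟩
    have hxU : x ∉ U := by
      intro hxU
      have h1 : x ∈ D := by rw [← hA.2]; exact mem_inter.2 ⟨hx.1, hxU⟩
      have h2 : x ∈ D' := by rw [← hA'.2]; exact mem_inter.2 ⟨hx.2, hxU⟩
      have : x ∈ D ∩ D' := mem_inter.2 ⟨h1, h2⟩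
      rw [hDD'] at this
      exact absurd this (notMem_empty x)
    simp [mem_inter, mem_sdiff, hx.1, hx.2, hxU]
  -- trace set facts
  have hUP : (U \ P) ⊆ U := sdiff_subset
  have hUP' : (U \ P') ⊆ U := sdiff_subset
  have hUPcard : (U \ P).card = 3 := by rw [card_sdiff_of_subset hP, hUcard, hPcard]
  have hUP'card : (U \ P').card = 3 := by rw [card_sdiff_of_subset hP', hUcard, hP'card]
  have hPdisj : P ∩ (U \ P) = ∅ := by
    rw [Finset.inter_sdiff_self]
  have hP'disj : P' ∩ (U \ P') = ∅ := by
    rw [Finset.inter_sdiff_self]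
  -- sized facts
  have hsP : ∀ T ∈ tails P, T ⊆ X ∧ T.card = a := by
    intro T hT
    have := htail_mem P hP T hT
    rw [hPcard] at this
    exact this
  have hsP' : ∀ T ∈ tails P', T ⊆ X ∧ T.card = a := by
    intro T hT
    have := htail_mem P' hP' T hT
    rw [hP'card] at this
    exact this
  have hsUP : ∀ T ∈ tails (U \ P), T ⊆ X ∧ T.card = b := by
    intro T hT
    have := htail_mem (U \ P) hUP T hT
    rw [hUPcard] at this
    exact this
  have hsUP' : ∀ T ∈ tails (U \ P'), T ⊆ X ∧ T.card = b := by
    intro T hT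
    have := htail_mem (U \ P') hUP' T hT
    rw [hUP'card] at this
    exact this
  -- apply the cross-intersecting bounds
  have hI : (tails P).card * X.card.choose a + (tails P').card * X.card.choose a ≤
      X.card.choose a * X.card.choose a :=
    cross_bound_nat X hsP hsP' (by rw [hXcard]; omega) (htail_cross P P' hdisj)
  have hII : (tails P).card * X.card.choose b + (tails (U \ P)).card * X.card.choose a ≤
      X.card.choose a * X.card.choose b :=
    cross_bound_nat X hsP hsUP (by rw [hXcard]; omega) (htail_cross P (U \ P) hPdisj)
  have hIII : (tails P').card * X.card.choose b + (tails (U \ P')).card * X.card.choose a ≤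
      X.card.choose a * X.card.choose b :=
    cross_bound_nat X hsP' hsUP' (by rw [hXcard]; omega) (htail_cross P' (U \ P') hP'disj)
  rw [hXcard] at hI hII hIII
  -- abbreviations
  set Ca : ℕ := m.choose a with hCa
  set Cb : ℕ := m.choose b with hCb
  have hCapos : 1 ≤ Ca := Nat.choose_pos (by omega)
  have hba : b ≤ a := by omega
  have hCble : Cb ≤ Ca := by
    rcases Nat.eq_or_lt_of_le hba with h | h
    · rw [hCa, hCb, h]
    · have hb1 : b + 1 = a := by omega
      have : Cb ≤ m.choose (b + 1) := by
        apply Nat.choose_le_succ_of_lt_half_left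
        omega
      rwa [hb1] at this
  have hfP := htail_card P
  have hfP' := htail_card P'
  have hfUP := htail_card (U \ P)
  have hfUP' := htail_card (U \ P')
  set s : ℕ := (tails P).card + (tails P').card with hs
  set t : ℕ := (tails (U \ P)).card + (tails (U \ P')).card with ht
  have hsCa : s ≤ Ca := by
    have : s * Ca ≤ Ca * Ca := by rw [hs, add_mul]; exact hI
    exact Nat.le_of_mul_le_mul_right this (by omega)
  have hsum : s * Cb + t * Ca ≤ 2 * (Ca * Cb) := by
    rw [hs, ht, add_mul, add_mul]
    omega
  have hgoal : s + t ≤ Ca + Cb := by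
    have key : (s + t) * Ca ≤ (Ca + Cb) * Ca := by
      have h1 : (s : ℤ) ≤ Ca := by exact_mod_cast hsCa
      have h2 : (Cb : ℤ) ≤ Ca := by exact_mod_cast hCble
      have h3 : (s : ℤ) * Cb + t * Ca ≤ 2 * (Ca * Cb) := by exact_mod_cast hsum
      have h4 : (0 : ℤ) ≤ ((Ca : ℤ) - s) * ((Ca : ℤ) - Cb) :=
        mul_nonneg (by omega) (by omega)
      have : ((s : ℤ) + t) * Ca ≤ ((Ca : ℤ) + Cb) * Ca := by nlinarith
      exact_mod_cast this
    exact Nat.le_of_mul_le_mul_right key (by omega)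
  calc (F.filter (fun A => A ∩ U = P)).card +
      (F.filter (fun A => A ∩ U = P')).card +
      (F.filter (fun A => A ∩ U = U \ P)).card +
      (F.filter (fun A => A ∩ U = U \ P')).card
      = s + t := by rw [hs, ht, ← hfP, ← hfP', ← hfUP, ← hfUP']; ring
    _ ≤ Ca + Cb := hgoal
end

section
/- Define f(k) = C(2k−3, k−1) − C(2k−3, k−3) − 3k + 4. Then f(k) ≥ 0 for all integers k ≥ 5. -/
lemma cb_step (m : ℕ) (hm : 1 ≤ m) :
    3 * Nat.centralBinom m ≤ Nat.centralBinom (m + 1) := by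
  have h := Nat.succ_mul_centralBinom_succ m
  have h2 : (m + 1) * (3 * Nat.centralBinom m) ≤ (m + 1) * Nat.centralBinom (m + 1) := by
    rw [h]
    have : 3 * (m + 1) ≤ 2 * (2 * m + 1) := by omega
    calc (m + 1) * (3 * Nat.centralBinom m) = (3 * (m + 1)) * Nat.centralBinom m := by ring
      _ ≤ (2 * (2 * m + 1)) * Nat.centralBinom m := Nat.mul_le_mul_right _ this
      _ = 2 * (2 * m + 1) * Nat.centralBinom m := by ring
  exact Nat.le_of_mul_le_mul_left h2 (Nat.succ_pos m)

lemma cb_lower (i : ℕ) : (i + 5) * (3 * i + 11) ≤ Nat.centralBinom (i + 4) := by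
  induction i with
  | zero => decide
  | succ n ih =>
      have h1 := cb_step (n + 4) (by omega)
      have h2 : (n + 6) * (3 * n + 14) ≤ 3 * ((n + 5) * (3 * n + 11)) := by nlinarith
      calc (n + 1 + 5) * (3 * (n + 1) + 11) = (n + 6) * (3 * n + 14) := by ring
        _ ≤ 3 * ((n + 5) * (3 * n + 11)) := h2
        _ ≤ 3 * Nat.centralBinom (n + 4) := Nat.mul_le_mul_left _ ih
        _ ≤ Nat.centralBinom (n + 4 + 1) := h1

lemma symm_eq (j : ℕ) : (2 * j + 7).choose (j + 3) = (2 * j + 7).choose (j + 4) := by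
  have := Nat.choose_symm (n := 2 * j + 7) (k := j + 4) (by omega)
  have h : 2 * j + 7 - (j + 4) = j + 3 := by omega
  rw [h] at this
  exact this

lemma ratio_eq (j : ℕ) :
    (j + 5) * (2 * j + 7).choose (j + 2) = (j + 3) * (2 * j + 7).choose (j + 4) := by
  have h := Nat.choose_succ_right_eq (2 * j + 7) (j + 2)
  have h2 : 2 * j + 7 - (j + 2) = j + 5 := by omega
  rw [h2] at h
  have h3 : (2 * j + 7).choose (j + 2 + 1) = (2 * j + 7).choose (j + 4) := by
    rw [show j + 2 + 1 = j + 3 from rfl, symm_eq]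
  rw [h3] at h
  linarith [h]

lemma cb_eq (j : ℕ) :
    Nat.centralBinom (j + 4) = 2 * (2 * j + 7).choose (j + 4) := by
  have : Nat.centralBinom (j + 4) = (2 * (j + 4)).choose (j + 4) := rfl
  rw [this, show 2 * (j + 4) = (2 * j + 7) + 1 from by ring,
    show (j + 4 : ℕ) = (j + 3) + 1 from rfl, Nat.choose_succ_succ, symm_eq]
  ring

/-- `f(k) = C(2k-3, k-1) - C(2k-3, k-3) - 3k + 4 ≥ 0` for all integers `k ≥ 5`. -/
theorem f_nonneg (k : ℕ) (hk : 5 ≤ k) :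
    (0 : ℤ) ≤ ((2 * k - 3).choose (k - 1) : ℤ) - (2 * k - 3).choose (k - 3)
      - 3 * k + 4 := by
  obtain ⟨j, rfl⟩ : ∃ j, k = j + 5 := ⟨k - 5, by omega⟩
  have h1 : 2 * (j + 5) - 3 = 2 * j + 7 := by omega
  have h2 : j + 5 - 1 = j + 4 := by omega
  have h3 : j + 5 - 3 = j + 2 := by omega
  rw [h1, h2, h3]
  have hr := ratio_eq j
  have hc := cb_eq j
  have hl := cb_lower j
  -- combine in ℤ after multiplying by (j+5)
  have key : ((j : ℤ) + 5) * (((2 * j + 7).choose (j + 4) : ℤ) - (2 * j + 7).choose (j + 2)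
      - 3 * ((j : ℕ) + 5 : ℕ) + 4) =
      2 * ((2 * j + 7).choose (j + 4) : ℤ) - ((j : ℤ) + 5) * (3 * j + 11) := by
    have hr' : ((j : ℤ) + 5) * ((2 * j + 7).choose (j + 2) : ℤ)
        = ((j : ℤ) + 3) * ((2 * j + 7).choose (j + 4) : ℤ) := by exact_mod_cast hr
    push_cast
    nlinarith [hr']
  have hl' : ((j : ℤ) + 5) * (3 * j + 11) ≤ 2 * ((2 * j + 7).choose (j + 4) : ℤ) := by
    have : ((j + 5) * (3 * j + 11) : ℤ) ≤ (Nat.centralBinom (j + 4) : ℤ) := by exact_mod_cast hl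
    rw [hc] at this
    push_cast at this ⊢
    linarith
  have hpos : (0 : ℤ) < (j : ℤ) + 5 := by positivity
  nlinarith [key, hl', hpos]
end

section
/- Let T ⊆ ([6] choose 3) be an intersecting family containing S = {{1,2,3},{1,4,5},{2,4,6}} but containing no three sets isomorphic to R = {{1,2,3},{1,4,5},{2,3,5}}. Then |T| ≤ 4. -/
/-- Extend a list-described permutation of `{1,…,6}` to all of `ℕ`. -/
def permF (l : List ℕ) : ℕ → ℕ :=
  fun n => if 1 ≤ n ∧ n ≤ 6 then l.getD (n - 1) 0 else n

lemma permF_inj (l : List ℕ) (h6 : l.length = 6) (hd : l.Nodup)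
    (hm : ∀ x ∈ l, 1 ≤ x ∧ x ≤ 6) : Function.Injective (permF l) := by
  intro a b hab
  unfold permF at hab
  split_ifs at hab with ha hb hb
  · have ha' : a - 1 < l.length := by omega
    have hb' : b - 1 < l.length := by omega
    rw [List.getD_eq_getElem l 0 ha', List.getD_eq_getElem l 0 hb'] at hab
    have := (List.Nodup.getElem_inj_iff hd).mp hab
    omega
  · have ha' : a - 1 < l.length := by omega
    rw [List.getD_eq_getElem l 0 ha'] at hab
    have := hm _ (List.getElem_mem ha')
    omega
  · have hb' : b - 1 < l.length := by omega
    rw [List.getD_eq_getElem l 0 hb'] at hab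
    have := hm _ (List.getElem_mem hb')
    omega
  · exact hab

lemma mk_copy (T : Finset (Finset ℕ)) (l : List ℕ) (h6 : l.length = 6)
    (hd : l.Nodup) (hm : ∀ x ∈ l, 1 ≤ x ∧ x ≤ 6)
    (h1 : ({1, 2, 3} : Finset ℕ).image (permF l) ∈ T)
    (h2 : ({1, 4, 5} : Finset ℕ).image (permF l) ∈ T)
    (h3 : ({2, 3, 5} : Finset ℕ).image (permF l) ∈ T) :
    ∃ f : ℕ → ℕ, Function.Injective f ∧
      ∀ X ∈ ({({1, 2, 3} : Finset ℕ), {1, 4, 5}, {2, 3, 5}} : Finset (Finset ℕ)),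
        X.image f ∈ T := by
  refine ⟨permF l, permF_inj l h6 hd hm, ?_⟩
  intro X hX
  simp only [Finset.mem_insert, Finset.mem_singleton] at hX
  rcases hX with rfl | rfl | rfl
  · exact h1
  · exact h2
  · exact h3

/-- An intersecting family `T ⊆ ([6] choose 3)` containing
`S = {{1,2,3},{1,4,5},{2,4,6}}` but no isomorphic copy of
`R = {{1,2,3},{1,4,5},{2,3,5}}` has at most 4 members. -/
theorem R_free_intersecting_card_le_four
    (T : Finset (Finset ℕ))
    (hTsub : ∀ X ∈ T, X ⊆ Finset.Icc 1 6 ∧ X.card = 3)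
    (hint : ∀ X ∈ T, ∀ X' ∈ T, (X ∩ X').Nonempty)
    (hS : ∀ X ∈ ({({1, 2, 3} : Finset ℕ), {1, 4, 5}, {2, 4, 6}} : Finset (Finset ℕ)),
      X ∈ T)
    (hRfree : ¬ ∃ f : ℕ → ℕ, Function.Injective f ∧
      ∀ X ∈ ({({1, 2, 3} : Finset ℕ), {1, 4, 5}, {2, 3, 5}} : Finset (Finset ℕ)),
        X.image f ∈ T) :
    T.card ≤ 4 := by
  have hA : ({1, 2, 3} : Finset ℕ) ∈ T := hS _ (by decide)
  have hB : ({1, 4, 5} : Finset ℕ) ∈ T := hS _ (by decide)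
  have hC : ({2, 4, 6} : Finset ℕ) ∈ T := hS _ (by decide)
  have key : ∀ X ∈ T, X = {1, 2, 3} ∨ X = {1, 4, 5} ∨ X = {2, 4, 6} ∨
      X = {1, 2, 4} ∨ X = {3, 5, 6} := by
    intro X hXT
    obtain ⟨hsub, hcard⟩ := hTsub X hXT
    have hmem : X ∈ (Finset.Icc 1 6).powersetCard 3 :=
      Finset.mem_powersetCard.mpr ⟨hsub, hcard⟩
    rw [show (Finset.Icc (1:ℕ) 6).powersetCard 3 =
        ({{1, 2, 3}, {1, 2, 4}, {1, 2, 5}, {1, 2, 6}, {1, 3, 4}, {1, 3, 5}, {1, 3, 6},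
          {1, 4, 5}, {1, 4, 6}, {1, 5, 6}, {2, 3, 4}, {2, 3, 5}, {2, 3, 6}, {2, 4, 5},
          {2, 4, 6}, {2, 5, 6}, {3, 4, 5}, {3, 4, 6}, {3, 5, 6}, {4, 5, 6}} :
          Finset (Finset ℕ)) from by decide] at hmem
    simp only [Finset.mem_insert, Finset.mem_singleton] at hmem
    rcases hmem with rfl|rfl|rfl|rfl|rfl|rfl|rfl|rfl|rfl|rfl|rfl|rfl|rfl|rfl|rfl|rfl|rfl|rfl|rfl|rfl
    · decide
    · decide
    · exact absurd (mk_copy T [2, 1, 5, 6, 4, 3] (by decide) (by decide) (by decide)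
        (by rw [show ({1, 2, 3}:Finset ℕ).image (permF [2, 1, 5, 6, 4, 3]) = {1, 2, 5} from by decide]; exact hXT)
        (by rw [show ({1, 4, 5}:Finset ℕ).image (permF [2, 1, 5, 6, 4, 3]) = {2, 4, 6} from by decide]; exact hC)
        (by rw [show ({2, 3, 5}:Finset ℕ).image (permF [2, 1, 5, 6, 4, 3]) = {1, 4, 5} from by decide]; exact hB)) hRfree
    · exact absurd (mk_copy T [1, 2, 6, 5, 4, 3] (by decide) (by decide) (by decide)
        (by rw [show ({1, 2, 3}:Finset ℕ).image (permF [1, 2, 6, 5, 4, 3]) = {1, 2, 6} from by decide]; exact hXT)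
        (by rw [show ({1, 4, 5}:Finset ℕ).image (permF [1, 2, 6, 5, 4, 3]) = {1, 4, 5} from by decide]; exact hB)
        (by rw [show ({2, 3, 5}:Finset ℕ).image (permF [1, 2, 6, 5, 4, 3]) = {2, 4, 6} from by decide]; exact hC)) hRfree
    · exact absurd (mk_copy T [2, 1, 3, 6, 4, 5] (by decide) (by decide) (by decide)
        (by rw [show ({1, 2, 3}:Finset ℕ).image (permF [2, 1, 3, 6, 4, 5]) = {1, 2, 3} from by decide]; exact hA)
        (by rw [show ({1, 4, 5}:Finset ℕ).image (permF [2, 1, 3, 6, 4, 5]) = {2, 4, 6} from by decide]; exact hC)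
        (by rw [show ({2, 3, 5}:Finset ℕ).image (permF [2, 1, 3, 6, 4, 5]) = {1, 3, 4} from by decide]; exact hXT)) hRfree
    · exact absurd (hint _ hXT _ hC) (by decide)
    · exact absurd (mk_copy T [2, 1, 3, 4, 6, 5] (by decide) (by decide) (by decide)
        (by rw [show ({1, 2, 3}:Finset ℕ).image (permF [2, 1, 3, 4, 6, 5]) = {1, 2, 3} from by decide]; exact hA)
        (by rw [show ({1, 4, 5}:Finset ℕ).image (permF [2, 1, 3, 4, 6, 5]) = {2, 4, 6} from by decide]; exact hC)
        (by rw [show ({2, 3, 5}:Finset ℕ).image (permF [2, 1, 3, 4, 6, 5]) = {1, 3, 6} from by decide]; exact hXT)) hRfree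
    · decide
    · exact absurd (mk_copy T [1, 4, 6, 3, 2, 5] (by decide) (by decide) (by decide)
        (by rw [show ({1, 2, 3}:Finset ℕ).image (permF [1, 4, 6, 3, 2, 5]) = {1, 4, 6} from by decide]; exact hXT)
        (by rw [show ({1, 4, 5}:Finset ℕ).image (permF [1, 4, 6, 3, 2, 5]) = {1, 2, 3} from by decide]; exact hA)
        (by rw [show ({2, 3, 5}:Finset ℕ).image (permF [1, 4, 6, 3, 2, 5]) = {2, 4, 6} from by decide]; exact hC)) hRfree
    · exact absurd (mk_copy T [4, 1, 5, 2, 6, 3] (by decide) (by decide) (by decide)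
        (by rw [show ({1, 2, 3}:Finset ℕ).image (permF [4, 1, 5, 2, 6, 3]) = {1, 4, 5} from by decide]; exact hB)
        (by rw [show ({1, 4, 5}:Finset ℕ).image (permF [4, 1, 5, 2, 6, 3]) = {2, 4, 6} from by decide]; exact hC)
        (by rw [show ({2, 3, 5}:Finset ℕ).image (permF [4, 1, 5, 2, 6, 3]) = {1, 5, 6} from by decide]; exact hXT)) hRfree
    · exact absurd (mk_copy T [1, 2, 3, 5, 4, 6] (by decide) (by decide) (by decide)
        (by rw [show ({1, 2, 3}:Finset ℕ).image (permF [1, 2, 3, 5, 4, 6]) = {1, 2, 3} from by decide]; exact hA)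
        (by rw [show ({1, 4, 5}:Finset ℕ).image (permF [1, 2, 3, 5, 4, 6]) = {1, 4, 5} from by decide]; exact hB)
        (by rw [show ({2, 3, 5}:Finset ℕ).image (permF [1, 2, 3, 5, 4, 6]) = {2, 3, 4} from by decide]; exact hXT)) hRfree
    · exact absurd (mk_copy T [1, 2, 3, 4, 5, 6] (by decide) (by decide) (by decide)
        (by rw [show ({1, 2, 3}:Finset ℕ).image (permF [1, 2, 3, 4, 5, 6]) = {1, 2, 3} from by decide]; exact hA)
        (by rw [show ({1, 4, 5}:Finset ℕ).image (permF [1, 2, 3, 4, 5, 6]) = {1, 4, 5} from by decide]; exact hB)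
        (by rw [show ({2, 3, 5}:Finset ℕ).image (permF [1, 2, 3, 4, 5, 6]) = {2, 3, 5} from by decide]; exact hXT)) hRfree
    · exact absurd (hint _ hXT _ hB) (by decide)
    · exact absurd (mk_copy T [1, 4, 5, 3, 2, 6] (by decide) (by decide) (by decide)
        (by rw [show ({1, 2, 3}:Finset ℕ).image (permF [1, 4, 5, 3, 2, 6]) = {1, 4, 5} from by decide]; exact hB)
        (by rw [show ({1, 4, 5}:Finset ℕ).image (permF [1, 4, 5, 3, 2, 6]) = {1, 2, 3} from by decide]; exact hA)
        (by rw [show ({2, 3, 5}:Finset ℕ).image (permF [1, 4, 5, 3, 2, 6]) = {2, 4, 5} from by decide]; exact hXT)) hRfree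
    · decide
    · exact absurd (mk_copy T [4, 2, 6, 1, 5, 3] (by decide) (by decide) (by decide)
        (by rw [show ({1, 2, 3}:Finset ℕ).image (permF [4, 2, 6, 1, 5, 3]) = {2, 4, 6} from by decide]; exact hC)
        (by rw [show ({1, 4, 5}:Finset ℕ).image (permF [4, 2, 6, 1, 5, 3]) = {1, 4, 5} from by decide]; exact hB)
        (by rw [show ({2, 3, 5}:Finset ℕ).image (permF [4, 2, 6, 1, 5, 3]) = {2, 5, 6} from by decide]; exact hXT)) hRfree
    · exact absurd (mk_copy T [1, 4, 5, 2, 3, 6] (by decide) (by decide) (by decide)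
        (by rw [show ({1, 2, 3}:Finset ℕ).image (permF [1, 4, 5, 2, 3, 6]) = {1, 4, 5} from by decide]; exact hB)
        (by rw [show ({1, 4, 5}:Finset ℕ).image (permF [1, 4, 5, 2, 3, 6]) = {1, 2, 3} from by decide]; exact hA)
        (by rw [show ({2, 3, 5}:Finset ℕ).image (permF [1, 4, 5, 2, 3, 6]) = {3, 4, 5} from by decide]; exact hXT)) hRfree
    · exact absurd (mk_copy T [2, 4, 6, 1, 3, 5] (by decide) (by decide) (by decide)
        (by rw [show ({1, 2, 3}:Finset ℕ).image (permF [2, 4, 6, 1, 3, 5]) = {2, 4, 6} from by decide]; exact hC)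
        (by rw [show ({1, 4, 5}:Finset ℕ).image (permF [2, 4, 6, 1, 3, 5]) = {1, 2, 3} from by decide]; exact hA)
        (by rw [show ({2, 3, 5}:Finset ℕ).image (permF [2, 4, 6, 1, 3, 5]) = {3, 4, 6} from by decide]; exact hXT)) hRfree
    · decide
    · exact absurd (hint _ hXT _ hA) (by decide)
  by_cases h124 : ({1, 2, 4} : Finset ℕ) ∈ T
  · have h356 : ({3, 5, 6} : Finset ℕ) ∉ T := fun h =>
      absurd (hint _ h124 _ h) (by decide)
    have hsub4 : T ⊆ ({{1, 2, 3}, {1, 4, 5}, {2, 4, 6}, {1, 2, 4}} : Finset (Finset ℕ)) := by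
      intro X hX
      rcases key X hX with rfl|rfl|rfl|rfl|rfl
      · decide
      · decide
      · decide
      · decide
      · exact absurd hX h356
    exact le_trans (Finset.card_le_card hsub4) (by decide)
  · have hsub4 : T ⊆ ({{1, 2, 3}, {1, 4, 5}, {2, 4, 6}, {3, 5, 6}} : Finset (Finset ℕ)) := by
      intro X hX
      rcases key X hX with rfl|rfl|rfl|rfl|rfl
      · decide
      · decide
      · decide
      · exact absurd hX h124
      · decide
    exact le_trans (Finset.card_le_card hsub4) (by decide)
end

section
/- Define the graph G on vertex set P(R) = {{1,2},{1,3},{1,5},{2,4},{2,5},{3,4},{3,5}} ⊆ ([5] choose 2) where two vertices are adjacent iff they are disjoint sets. Then for any independent set I of G, either G − {1,5} can be partitioned into 3 pairwise disjoint edges with {1,5} ∉ I available as the leftover vertex, or the three edges ({1,3},{2,5}), ({3,5},{1,2}), ({1,5},{2,4}) partition G − {3,4} with {3,4} ∉ I; in particular G can always be partitioned into 3 pairwise disjoint edges plus one vertex P0 ∉ I. -/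
/-- Let `G` be the graph on `P(R) = {{1,2},{1,3},{1,5},{2,4},{2,5},{3,4},{3,5}}` where
two vertices are adjacent iff they are disjoint sets.  For every independent set `I` of
`G`, the vertex set `P(R)` can be partitioned into three pairwise disjoint edges of `G`
together with one vertex `P0 ∉ I`. -/
theorem matching_avoiding_independent_set
    (PR : Finset (Finset ℕ))
    (hPR : PR = ({({1, 2} : Finset ℕ), {1, 3}, {1, 5}, {2, 4}, {2, 5}, {3, 4}, {3, 5}} :
      Finset (Finset ℕ)))
    (I : Finset (Finset ℕ)) (hI : I ⊆ PR)
    (hInd : ∀ P ∈ I, ∀ Q ∈ I, ¬ Disjoint P Q) :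
    ∃ P0 ∈ PR, P0 ∉ I ∧
      ∃ A B C D E G : Finset ℕ,
        PR = {P0, A, B, C, D, E, G} ∧
        ({P0, A, B, C, D, E, G} : Finset (Finset ℕ)).card = 7 ∧
        Disjoint A B ∧ Disjoint C D ∧ Disjoint E G := by
  subst hPR
  by_cases h15 : ({1, 5} : Finset ℕ) ∈ I
  · -- then {3,4} ∉ I
    have h34 : ({3, 4} : Finset ℕ) ∉ I := by
      intro h34
      exact hInd _ h15 _ h34 (by decide)
    refine ⟨{3, 4}, by decide, h34, {1, 3}, {2, 5}, {3, 5}, {1, 2}, {1, 5}, {2, 4},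
      by decide, by decide, by decide, by decide, by decide⟩
  · refine ⟨{1, 5}, by decide, h15, {1, 2}, {3, 5}, {1, 3}, {2, 4}, {2, 5}, {3, 4},
      by decide, by decide, by decide, by decide, by decide⟩
end
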